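/- arXiv:2603.01112 — 4 statements merged into one kernel-verified Lean document; each statement's English description precedes it below -/
import Mathlib

section
/- For the golden ratio φ = (1+√5)/2, one has π²/6 − Li₂(1/φ) = π²/15 + (log φ)², where Li₂ is the dilogarithm. -/
open Real Filter Set Topology

/-- The dilogarithm `Li₂(x) = ∑_{n≥1} xⁿ/n²`. -/
noncomputable def li2 (x : ℝ) : ℝ := ∑' n : ℕ, x ^ (n + 1) / ((n : ℝ) + 1) ^ 2

/-- The golden ratio. -/
noncomputable def goldenRatio' : ℝ := (1 + Real.sqrt 5) / 2

lemma summable_inv_sq : Summable (fun n : ℕ => 1 / ((n : ℝ) + 1) ^ 2) := by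
  have := (summable_nat_add_iff (f := fun n : ℕ => 1 / (n : ℝ) ^ 2) 1).mpr
    (Real.summable_one_div_nat_pow.mpr one_lt_two)
  refine this.congr fun n => ?_
  push_cast
  ring_nf

lemma li2_summable {x : ℝ} (hx : |x| ≤ 1) :
    Summable (fun n : ℕ => x ^ (n + 1) / ((n : ℝ) + 1) ^ 2) := by
  apply Summable.of_norm_bounded summable_inv_sq
  intro n
  have h1 : (0:ℝ) < ((n : ℝ) + 1) ^ 2 := by positivity
  rw [norm_div, norm_pow, Real.norm_eq_abs, Real.norm_eq_abs, abs_of_pos h1]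
  gcongr
  calc |x| ^ (n+1) ≤ 1 ^ (n+1) := pow_le_pow_left₀ (abs_nonneg x) hx _
  _ = 1 := one_pow _

lemma li2_hasSum {x : ℝ} (hx : |x| ≤ 1) :
    HasSum (fun n : ℕ => x ^ (n + 1) / ((n : ℝ) + 1) ^ 2) (li2 x) :=
  (li2_summable hx).hasSum

lemma li2_zero : li2 0 = 0 := by
  unfold li2
  simp

lemma li2_one : li2 1 = Real.pi ^ 2 / 6 := by
  have h := hasSum_zeta_two
  have h1 : HasSum (fun n : ℕ => (1:ℝ) / ((n:ℝ) + 1) ^ 2) (Real.pi ^ 2 / 6) := by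
    have h2 := (hasSum_nat_add_iff' (f := fun n : ℕ => (1:ℝ) / (n : ℝ) ^ 2) 1
      (g := Real.pi ^ 2 / 6)).mpr h
    simp only [Finset.range_one, Finset.sum_singleton, Nat.cast_zero] at h2
    norm_num at h2
    refine h2.congr_fun fun n => ?_
    push_cast
    ring_nf
  unfold li2
  simpa using h1.tsum_eq

lemma li2_term_bound {y : ℝ} (hy : |y| ≤ 1) (n : ℕ) :
    ‖y ^ (n + 1) / ((n : ℝ) + 1) ^ 2‖ ≤ 1 / ((n : ℝ) + 1) ^ 2 := by
  have h1 : (0:ℝ) < ((n : ℝ) + 1) ^ 2 := by positivity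
  rw [norm_div, norm_pow, Real.norm_eq_abs, Real.norm_eq_abs, abs_of_pos h1]
  gcongr
  calc |y| ^ (n+1) ≤ 1 ^ (n+1) := pow_le_pow_left₀ (abs_nonneg y) hy _
  _ = 1 := one_pow _

/-- Derivative of the dilogarithm. -/
lemma li2_hasDerivAt {x : ℝ} (hx : |x| < 1) (hx0 : x ≠ 0) :
    HasDerivAt li2 (-Real.log (1 - x) / x) x := by
  set r : ℝ := (1 + |x|) / 2 with hrdef
  have hxr : |x| < r := by rw [hrdef]; linarith
  have hr1 : r < 1 := by rw [hrdef]; linarith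
  have hr0 : 0 ≤ r := le_trans (abs_nonneg x) hxr.le
  have key : HasDerivAt (fun y : ℝ => ∑' n : ℕ, y ^ (n + 1) / ((n : ℝ) + 1) ^ 2)
      (∑' n : ℕ, x ^ n / ((n : ℝ) + 1)) x := by
    refine hasDerivAt_tsum_of_isPreconnected
      (u := fun n : ℕ => r ^ n)
      (g := fun (n : ℕ) (y : ℝ) => y ^ (n + 1) / ((n : ℝ) + 1) ^ 2)
      (g' := fun (n : ℕ) (y : ℝ) => y ^ n / ((n : ℝ) + 1))
      (y₀ := (0:ℝ)) (t := Metric.ball (0:ℝ) r)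
      (summable_geometric_of_lt_one hr0 hr1)
      Metric.isOpen_ball
      ((convex_ball (0:ℝ) r).isPreconnected)
      (fun n y _ => ?_) (fun n y hy => ?_) ?_ ?_ ?_
    · show HasDerivAt (fun y : ℝ => y ^ (n + 1) / ((n : ℝ) + 1) ^ 2)
        (y ^ n / ((n : ℝ) + 1)) y
      have h := (hasDerivAt_pow (n + 1) y).div_const (((n : ℝ) + 1) ^ 2)
      refine h.congr_deriv (Eq.symm ?_)
      have hn : ((n : ℝ) + 1) ≠ 0 := by positivity
      push_cast
      field_simp
    · show ‖y ^ n / ((n : ℝ) + 1)‖ ≤ r ^ n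
      rw [Metric.mem_ball, Real.dist_eq, sub_zero] at hy
      have hn : (1:ℝ) ≤ (n : ℝ) + 1 := by
        have : (0:ℝ) ≤ (n:ℝ) := Nat.cast_nonneg n
        linarith
      rw [norm_div, norm_pow, Real.norm_eq_abs, Real.norm_eq_abs,
        abs_of_pos (by positivity : (0:ℝ) < (n:ℝ)+1)]
      calc |y| ^ n / ((n:ℝ) + 1) ≤ |y| ^ n / 1 := by gcongr
        _ = |y| ^ n := div_one _
        _ ≤ r ^ n := pow_le_pow_left₀ (abs_nonneg y) hy.le n
    · show (0:ℝ) ∈ Metric.ball (0:ℝ) r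
      simp only [Metric.mem_ball, dist_self]
      linarith [abs_nonneg x]
    · apply summable_zero.congr
      intro n
      simp
    · show x ∈ Metric.ball (0:ℝ) r
      rw [Metric.mem_ball, Real.dist_eq, sub_zero]
      exact hxr
  have hsum : (∑' n : ℕ, x ^ n / ((n : ℝ) + 1)) = -Real.log (1 - x) / x := by
    have hs := Real.hasSum_pow_div_log_of_abs_lt_one hx
    have hs' : HasSum (fun n : ℕ => x * (x ^ n / ((n : ℝ) + 1))) (-Real.log (1 - x)) := by
      refine hs.congr_fun fun n => ?_
      rw [pow_succ']
      ring
    have hs'' := hs'.mul_left x⁻¹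
    have hs3 : HasSum (fun n : ℕ => x ^ n / ((n : ℝ) + 1)) (x⁻¹ * -Real.log (1 - x)) := by
      refine hs''.congr_fun fun n => ?_
      rw [inv_mul_cancel_left₀ hx0]
    rw [hs3.tsum_eq]
    field_simp
  rw [← hsum]
  exact key

/-- Continuity of li2 on [-1,1]. -/
lemma li2_continuousOn : ContinuousOn li2 (Icc (-1 : ℝ) 1) := by
  have hc : Continuous (fun x : ℝ => ∑' n : ℕ,
      (max (-1) (min 1 x)) ^ (n + 1) / ((n : ℝ) + 1) ^ 2) := by
    apply continuous_tsum ?_ summable_inv_sq ?_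
    · intro n
      apply Continuous.div_const
      exact (continuous_const.max (continuous_const.min continuous_id)).pow _
    · intro n y
      apply li2_term_bound _ n
      rw [abs_le]
      constructor
      · exact le_max_left _ _
      · exact max_le (by norm_num) (min_le_left _ _)
  apply hc.continuousOn.congr
  intro y hy
  unfold li2
  simp only [min_eq_right hy.2, max_eq_right hy.1]

lemma li2_continuousAt {x : ℝ} (hx : |x| < 1) : ContinuousAt li2 x := by
  apply li2_continuousOn.continuousAt
  rw [abs_lt] at hx
  exact Icc_mem_nhds hx.1 hx.2

/-- Functions with zero derivative on an open interval are constant there. -/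
lemma eq_of_hasDerivAt_zero {f : ℝ → ℝ} {a b : ℝ}
    (hf : ∀ z ∈ Ioo a b, HasDerivAt f 0 z) {x y : ℝ}
    (hx : x ∈ Ioo a b) (hy : y ∈ Ioo a b) : f x = f y := by
  wlog h : x < y generalizing x y
  · rcases eq_or_lt_of_le (not_lt.mp h) with h' | h'
    · exact congrArg f h'.symm
    · exact (this hy hx h').symm
  have hsub : Icc x y ⊆ Ioo a b := fun z hz => ⟨lt_of_lt_of_le hx.1 hz.1,
    lt_of_le_of_lt hz.2 hy.2⟩
  have hcont : ContinuousOn f (Icc x y) := fun z hz =>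
    ((hf z (hsub hz)).continuousAt).continuousWithinAt
  have hderiv : ∀ z ∈ Ioo x y, HasDerivAt f 0 z := fun z hz =>
    hf z (hsub (Ioo_subset_Icc_self hz))
  obtain ⟨c, _, hceq⟩ := exists_hasDerivAt_eq_slope f (fun _ => 0) h hcont hderiv
  have hxy : y - x ≠ 0 := sub_ne_zero.mpr h.ne'
  rcases div_eq_zero_iff.mp hceq.symm with h1 | h1
  · linarith [sub_eq_zero.mp h1]
  · exact absurd h1 hxy

lemma neBot_Ioo_right {a b : ℝ} (hab : a < b) : (𝓝[Ioo a b] b).NeBot := by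
  refine mem_closure_iff_nhdsWithin_neBot.mp ?_
  rw [closure_Ioo hab.ne]
  exact ⟨hab.le, le_refl b⟩

lemma neBot_Ioo_left {a b : ℝ} (hab : a < b) : (𝓝[Ioo a b] a).NeBot := by
  refine mem_closure_iff_nhdsWithin_neBot.mp ?_
  rw [closure_Ioo hab.ne]
  exact ⟨le_refl a, hab.le⟩

/-- Euler reflection: li2 x + li2 (1-x) = π²/6 - log x * log (1-x) on (0,1). -/
lemma li2_reflection {x : ℝ} (hx : x ∈ Ioo (0:ℝ) 1) :
    li2 x + li2 (1 - x) + Real.log x * Real.log (1 - x) = Real.pi ^ 2 / 6 := by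
  set F : ℝ → ℝ := fun z => li2 z + li2 (1 - z) + Real.log z * Real.log (1 - z) with hF
  have hderiv : ∀ z ∈ Ioo (0:ℝ) 1, HasDerivAt F 0 z := by
    intro z hz
    obtain ⟨hz0, hz1⟩ := hz
    have hz1' : (0:ℝ) < 1 - z := by linarith
    have habs : |z| < 1 := by rw [abs_lt]; constructor <;> linarith
    have habs' : |1 - z| < 1 := by rw [abs_lt]; constructor <;> linarith
    have hinner : HasDerivAt (fun y : ℝ => 1 - y) (-1) z := by
      simpa using (hasDerivAt_id z).const_sub 1
    have h1 := li2_hasDerivAt habs hz0.ne'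
    have h2 : HasDerivAt (fun y => li2 (1 - y))
        (-Real.log (1 - (1 - z)) / (1 - z) * (-1)) z :=
      (li2_hasDerivAt habs' hz1'.ne').comp z hinner
    have h3 : HasDerivAt (fun y : ℝ => Real.log y * Real.log (1 - y))
        (z⁻¹ * Real.log (1 - z) + Real.log z * ((1 - z)⁻¹ * (-1))) z :=
      (Real.hasDerivAt_log hz0.ne').mul ((Real.hasDerivAt_log hz1'.ne').comp z hinner)
    have hsum := (h1.add h2).add h3
    refine hsum.congr_deriv (Eq.symm ?_)
    rw [show (1 : ℝ) - (1 - z) = z by ring]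
    field_simp
    ring
  haveI hne : (𝓝[Ioo (0:ℝ) 1] (1:ℝ)).NeBot := neBot_Ioo_right one_pos
  set l := 𝓝[Ioo (0:ℝ) 1] (1:ℝ) with hl
  have hconst : ∀ z ∈ Ioo (0:ℝ) 1, F z = F x := fun z hz =>
    eq_of_hasDerivAt_zero hderiv hz hx
  have hmemIcc : Ioo (0:ℝ) 1 ⊆ Icc (-1:ℝ) 1 := fun z hz => ⟨by linarith [hz.1], hz.2.le⟩
  have hT1 : Tendsto li2 l (𝓝 (Real.pi ^ 2 / 6)) := by
    rw [← li2_one]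
    exact ((li2_continuousOn 1 (by norm_num)).mono_left (nhdsWithin_mono 1 hmemIcc))
  have hsub1 : Tendsto (fun z : ℝ => 1 - z) l (𝓝 0) := by
    have : Tendsto (fun z : ℝ => 1 - z) (𝓝 (1:ℝ)) (𝓝 (1 - 1)) :=
      (continuous_const.sub continuous_id).tendsto 1
    simpa using this.mono_left nhdsWithin_le_nhds
  have hT2 : Tendsto (fun z => li2 (1 - z)) l (𝓝 0) := by
    rw [← li2_zero]
    exact (li2_continuousAt (by norm_num : |(0:ℝ)| < 1)).tendsto.comp hsub1
  have hT3 : Tendsto (fun z => Real.log z * Real.log (1 - z)) l (𝓝 0) := by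
    have hB : Tendsto (fun z : ℝ => -(Real.log (1 - z) * (1 - z)) * z⁻¹) l (𝓝 0) := by
      have t0 : Tendsto (fun t : ℝ => Real.log t * t) (𝓝[>] (0:ℝ)) (𝓝 0) := by
        have := tendsto_log_mul_rpow_nhdsGT_zero one_pos
        refine this.congr' ?_
        filter_upwards [self_mem_nhdsWithin] with t _
        rw [Real.rpow_one]
      have hmap : Tendsto (fun z : ℝ => 1 - z) l (𝓝[>] (0:ℝ)) := by
        rw [tendsto_nhdsWithin_iff]
        refine ⟨hsub1, ?_⟩
        filter_upwards [self_mem_nhdsWithin] with z hz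
        exact sub_pos.mpr hz.2
      have t1 : Tendsto (fun z : ℝ => Real.log (1 - z) * (1 - z)) l (𝓝 0) :=
        t0.comp hmap
      have t2 : Tendsto (fun z : ℝ => z⁻¹) l (𝓝 (1:ℝ)⁻¹) :=
        (continuousAt_inv₀ one_ne_zero).tendsto.mono_left
          (by rw [hl]; exact nhdsWithin_le_nhds)
      have h := (t1.neg).mul t2
      norm_num at h
      refine h.congr fun z => ?_
      ring
    apply squeeze_zero' ?_ ?_ hB
    · filter_upwards [self_mem_nhdsWithin] with z hz
      have h1 : Real.log z ≤ 0 := Real.log_nonpos hz.1.le hz.2.le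
      have h2 : Real.log (1 - z) ≤ 0 :=
        Real.log_nonpos (by linarith [hz.2]) (by linarith [hz.1])
      have := mul_nonneg (neg_nonneg.2 h1) (neg_nonneg.2 h2)
      rwa [neg_mul_neg] at this
    · filter_upwards [self_mem_nhdsWithin] with z hz
      obtain ⟨hz0, hz1⟩ := hz
      have hlz : -Real.log z ≤ (1 - z) * z⁻¹ := by
        have h := Real.log_le_sub_one_of_pos (inv_pos.mpr hz0)
        rw [Real.log_inv] at h
        have : z⁻¹ - 1 = (1 - z) * z⁻¹ := by field_simp
        linarith
      have hlz1 : Real.log (1 - z) ≤ 0 := Real.log_nonpos (by linarith) (by linarith)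
      have hlz0 : Real.log z ≤ 0 := Real.log_nonpos hz0.le hz1.le
      nlinarith [mul_le_mul_of_nonneg_right hlz (neg_nonneg.mpr hlz1)]
  have hTF : Tendsto F l (𝓝 (Real.pi ^ 2 / 6 + 0 + 0)) := (hT1.add hT2).add hT3
  have hTF' : Tendsto F l (𝓝 (F x)) := by
    refine Tendsto.congr' ?_ tendsto_const_nhds
    filter_upwards [self_mem_nhdsWithin] with z hz
    exact (hconst z hz).symm
  have hfinal := tendsto_nhds_unique hTF' hTF
  rw [hF] at hfinal
  simpa using hfinal

/-- Landen: li2 (-x) + li2 (x/(1+x)) = -(log (1+x))²/2 for x ∈ (0, 0.7). -/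
lemma li2_landen {x : ℝ} (hx : x ∈ Ioo (0:ℝ) 0.7) :
    li2 (-x) + li2 (x / (1 + x)) + Real.log (1 + x) ^ 2 / 2 = 0 := by
  set G : ℝ → ℝ := fun z => li2 (-z) + li2 (z / (1 + z)) + Real.log (1 + z) ^ 2 / 2 with hG
  have hderiv : ∀ z ∈ Ioo (0:ℝ) 0.7, HasDerivAt G 0 z := by
    intro z hz
    obtain ⟨hz0, hz7⟩ := hz
    rw [show (0.7:ℝ) = 7/10 by norm_num] at hz7
    have hz1 : (0:ℝ) < 1 + z := by linarith
    have habs : |(-z)| < 1 := by rw [abs_neg, abs_lt]; constructor <;> linarith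
    have hy0 : (0:ℝ) < z / (1 + z) := by positivity
    have hy1 : z / (1 + z) < 1 := by rw [div_lt_one hz1]; linarith
    have habsy : |z / (1 + z)| < 1 := by
      rw [abs_lt]
      exact ⟨by linarith, hy1⟩
    have hinnerneg : HasDerivAt (fun w : ℝ => -w) (-1) z := (hasDerivAt_id z).neg
    have h1 : HasDerivAt (fun w => li2 (-w)) (-Real.log (1 - -z) / -z * (-1)) z :=
      (li2_hasDerivAt habs (neg_ne_zero.mpr hz0.ne')).comp z hinnerneg
    have hinner : HasDerivAt (fun w : ℝ => w / (1 + w))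
        ((1 * (1 + z) - z * 1) / (1 + z) ^ 2) z :=
      (hasDerivAt_id z).div ((hasDerivAt_id z).const_add 1) hz1.ne'
    have h2 : HasDerivAt (fun w => li2 (w / (1 + w)))
        (-Real.log (1 - z / (1 + z)) / (z / (1 + z)) *
          ((1 * (1 + z) - z * 1) / (1 + z) ^ 2)) z :=
      by
        have hA := li2_hasDerivAt habsy hy0.ne'
        have hB := hA.comp z hinner
        exact hB
    have hlog : HasDerivAt (fun w : ℝ => Real.log (1 + w)) ((1 + z)⁻¹ * 1) z :=
      (Real.hasDerivAt_log hz1.ne').comp z ((hasDerivAt_id z).const_add 1)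
    have h3 := (hlog.pow 2).div_const 2
    have hsum := (h1.add h2).add h3
    refine hsum.congr_deriv (Eq.symm ?_)
    have hs1 : (1:ℝ) - z / (1 + z) = (1 + z)⁻¹ := by field_simp; ring
    rw [hs1, Real.log_inv, show (1:ℝ) - -z = 1 + z by ring]
    have hlogsafe : Real.log (1 + z) = Real.log (1 + z) := rfl
    push_cast
    field_simp
    ring
  haveI hne : (𝓝[Ioo (0:ℝ) 0.7] (0:ℝ)).NeBot := neBot_Ioo_left (by norm_num)
  set l := 𝓝[Ioo (0:ℝ) 0.7] (0:ℝ) with hl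
  have hll : l ≤ 𝓝 (0:ℝ) := by rw [hl]; exact nhdsWithin_le_nhds
  have hconst : ∀ z ∈ Ioo (0:ℝ) 0.7, G z = G x := fun z hz =>
    eq_of_hasDerivAt_zero hderiv hz hx
  have hT1 : Tendsto (fun z => li2 (-z)) l (𝓝 0) := by
    rw [← li2_zero]
    refine (li2_continuousAt (by norm_num : |(0:ℝ)| < 1)).tendsto.comp ?_
    have : Tendsto (fun z : ℝ => -z) (𝓝 (0:ℝ)) (𝓝 (-0)) := (continuous_neg.tendsto 0)
    simpa using this.mono_left hll
  have hT2 : Tendsto (fun z => li2 (z / (1 + z))) l (𝓝 0) := by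
    rw [← li2_zero]
    refine (li2_continuousAt (by norm_num : |(0:ℝ)| < 1)).tendsto.comp ?_
    have : ContinuousAt (fun z : ℝ => z / (1 + z)) 0 :=
      continuousAt_id.div (continuousAt_const.add continuousAt_id) (by norm_num)
    have h := this.tendsto.mono_left hll
    simpa using h
  have hT3 : Tendsto (fun z : ℝ => Real.log (1 + z) ^ 2 / 2) l (𝓝 0) := by
    have : ContinuousAt (fun z : ℝ => Real.log (1 + z) ^ 2 / 2) 0 := by
      have hc : ContinuousAt (fun z : ℝ => 1 + z) 0 :=
        continuousAt_const.add continuousAt_id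
      have hlog : ContinuousAt Real.log ((fun z : ℝ => 1 + z) 0) :=
        Real.continuousAt_log (by norm_num)
      exact ((hlog.comp hc).pow 2).div_const 2
    have h := this.tendsto.mono_left hll
    simpa using h
  have hTG : Tendsto G l (𝓝 (0 + 0 + 0)) := (hT1.add hT2).add hT3
  have hTG' : Tendsto G l (𝓝 (G x)) := by
    refine Tendsto.congr' ?_ tendsto_const_nhds
    filter_upwards [self_mem_nhdsWithin] with z hz
    exact (hconst z hz).symm
  have hfinal := tendsto_nhds_unique hTG' hTG
  rw [hG] at hfinal
  simpa using hfinal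

/-- Duplication: li2 x + li2 (-x) = li2 (x²) / 2 for |x| ≤ 1. -/
lemma li2_duplication {x : ℝ} (hx : |x| ≤ 1) :
    li2 x + li2 (-x) = li2 (x ^ 2) / 2 := by
  have hx' : |(-x)| ≤ 1 := by rwa [abs_neg]
  have hx2 : |x ^ 2| ≤ 1 := by
    rw [abs_pow]
    exact pow_le_one₀ (abs_nonneg x) hx
  have h1 := (li2_hasSum hx).add (li2_hasSum hx')
  have h2 := (li2_hasSum hx2).div_const 2
  set f : ℕ → ℝ := fun k => x ^ (k + 1) / ((k : ℝ) + 1) ^ 2 +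
    (-x) ^ (k + 1) / ((k : ℝ) + 1) ^ 2 with hf
  have hinj : Function.Injective (fun n : ℕ => 2 * n + 1) := by
    intro a b h
    simp only at h
    omega
  have hvan : ∀ m : ℕ, m ∉ Set.range (fun n : ℕ => 2 * n + 1) → f m = 0 := by
    intro m hm
    have hme : Even m := by
      rcases Nat.even_or_odd m with he | ho
      · exact he
      · exfalso
        obtain ⟨k, hk⟩ := ho
        exact hm ⟨k, hk.symm⟩
    have hodd : Odd (m + 1) := Even.add_one hme
    rw [hf]
    simp only
    rw [hodd.neg_pow]
    ring
  have hcomp : HasSum (f ∘ fun n : ℕ => 2 * n + 1) (li2 (x ^ 2) / 2) := by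
    refine h2.congr_fun fun n => ?_
    show f (2 * n + 1) = (x ^ 2) ^ (n + 1) / ((n : ℝ) + 1) ^ 2 / 2
    rw [hf]
    simp only
    have heven : Even (2 * n + 1 + 1) := by
      refine ⟨n + 1, by ring⟩
    have hcast : ((2 * n + 1 : ℕ) : ℝ) = 2 * (n : ℝ) + 1 := by push_cast; ring
    have hpow : x ^ (2 * n + 1 + 1) = (x ^ 2) ^ (n + 1) := by
      rw [show 2 * n + 1 + 1 = 2 * (n + 1) by ring, pow_mul]
    rw [heven.neg_pow, hcast, hpow]
    have hne : ((n:ℝ) + 1) ≠ 0 := by positivity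
    have hne2 : (2 * (n:ℝ) + 1 + 1) ≠ 0 := by positivity
    field_simp
    ring
  have h3 : HasSum f (li2 (x ^ 2) / 2) := (hinj.hasSum_iff hvan).mp hcomp
  exact h1.unique h3

set_option maxHeartbeats 1000000 in
theorem dilog_golden :
    Real.pi ^ 2 / 6 - li2 (1 / goldenRatio') =
      Real.pi ^ 2 / 15 + (Real.log goldenRatio') ^ 2 := by
  have h5 : Real.sqrt 5 ^ 2 = 5 := Real.sq_sqrt (by norm_num : (0:ℝ) ≤ 5)
  have h5lb : (2:ℝ) < Real.sqrt 5 := by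
    rw [show (2:ℝ) = Real.sqrt 4 by
      rw [show (4:ℝ) = 2 ^ 2 by norm_num, Real.sqrt_sq (by norm_num)]]
    exact Real.sqrt_lt_sqrt (by norm_num) (by norm_num)
  have h5ub : Real.sqrt 5 < 2.3 := by
    nlinarith [Real.sqrt_nonneg 5]
  set φ := goldenRatio' with hφ
  have hφval : φ = (1 + Real.sqrt 5) / 2 := rfl
  have hφ1 : (1.5:ℝ) < φ := by rw [hφval]; linarith
  have hφub : φ < 1.65 := by rw [hφval]; linarith
  have hφ0 : (0:ℝ) < φ := by linarith
  have hφsq : φ ^ 2 = φ + 1 := by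
    rw [hφval]
    nlinarith [h5]
  set t := 1 / φ with ht
  have ht0 : (0:ℝ) < t := by positivity
  have ht1 : t < 1 := by
    rw [ht, div_lt_one hφ0]
    linarith
  have ht7 : t < 0.7 := by
    rw [ht, div_lt_iff₀ hφ0]
    linarith
  have htabs : |t| ≤ 1 := by rw [abs_of_pos ht0]; linarith
  -- algebraic identities
  have hid1 : 1 - t = t ^ 2 := by
    rw [ht]
    field_simp
    nlinarith [hφsq]
  have hid2 : 1 + t = φ := by
    rw [ht]
    field_simp
    nlinarith [hφsq]
  have hid3 : t / (1 + t) = t ^ 2 := by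
    rw [hid2, ht]
    field_simp
  have hlogt : Real.log t = -Real.log φ := by
    rw [ht, one_div, Real.log_inv]
  have hlogt2 : Real.log (t ^ 2) = -2 * Real.log φ := by
    rw [Real.log_pow, hlogt]
    push_cast
    ring
  set L := Real.log φ with hL
  -- three functional equations
  have E1 := li2_reflection (x := t) ⟨ht0, ht1⟩
  have E2 := li2_duplication htabs
  have E3 := li2_landen (x := t) ⟨ht0, ht7⟩
  rw [hid1] at E1
  rw [hid3, hid2] at E3
  rw [hlogt, hlogt2] at E1
  -- E1 : li2 t + li2 (t^2) + (-L) * (-2*L) = π²/6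
  -- E2 : li2 t + li2 (-t) = li2 (t^2) / 2
  -- E3 : li2 (-t) + li2 (t^2) + L^2/2 = 0
  have hLL : (-Real.log φ) * (-2 * Real.log φ) = 2 * L ^ 2 := by rw [hL]; ring
  rw [hLL] at E1
  have hE3' : li2 (-t) + li2 (t ^ 2) + L ^ 2 / 2 = 0 := by
    rw [hL]
    exact E3
  have hE1' : li2 t + li2 (t ^ 2) + 2 * L ^ 2 = Real.pi ^ 2 / 6 := by
    rw [hL]
    nlinarith [E1]
  linarith
end

section
/- If λ is a partition all of whose successive parts differ by at least 2 (i.e., λ_i − λ_{i+1} ≥ 2 for all i), then the number of cells of λ with hook length 1 equals the number of parts of λ, and the number of cells with hook length 2 equals the number of parts of λ that are greater than 1. -/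
open Finset

/-- The conjugate partition value at column `j` (0-based). -/
def conjPart (ℓ : ℕ) (p : ℕ → ℕ) (j : ℕ) : ℕ :=
  ((Finset.range ℓ).filter fun i => j < p i).card

/-- The hook length of the cell in (0-based) row `i` and column `j`. -/
def hookLen (ℓ : ℕ) (p : ℕ → ℕ) (i j : ℕ) : ℤ :=
  (p i : ℤ) + (conjPart ℓ p j : ℤ) - i - j - 1

/-- The number of cells of the Young diagram with hook length `t`. -/
def hookCount (ℓ : ℕ) (p : ℕ → ℕ) (t : ℤ) : ℕ :=
  (((Finset.range ℓ).sigma fun i => Finset.range (p i)).filter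
    fun c => hookLen ℓ p c.1 c.2 = t).card

/-- For a partition with successive parts differing by at least 2, the number of 1-hooks
is the number of parts and the number of 2-hooks is the number of parts greater than 1. -/
theorem hooks_of_gap_two_partition (ℓ : ℕ) (p : ℕ → ℕ)
    (hpos : ∀ i < ℓ, 0 < p i) (hzero : ∀ i, ℓ ≤ i → p i = 0)
    (hdec : ∀ i, p (i + 1) ≤ p i)
    (hgap : ∀ i, i + 1 < ℓ → p (i + 1) + 2 ≤ p i) :
    hookCount ℓ p 1 = ℓ ∧
      hookCount ℓ p 2 = ((Finset.range ℓ).filter fun i => 1 < p i).card := by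
  have hanti : Antitone p := antitone_nat_of_succ_le hdec
  have hA : ∀ i < ℓ, ∀ j < p i, i + 1 ≤ conjPart ℓ p j := by
    intro i hi j hj
    have hsub : Finset.range (i+1) ⊆ (Finset.range ℓ).filter fun k => j < p k := by
      intro k hk
      simp only [mem_range] at hk
      simp only [mem_filter, mem_range]
      exact ⟨by omega, lt_of_lt_of_le hj (hanti (by omega))⟩
    have := Finset.card_le_card hsub
    simpa [conjPart] using this
  have hB : ∀ i < ℓ, ∀ j, p i ≤ j + 2 → j < p i → conjPart ℓ p j = i + 1 := by
    intro i hi j hj2 hj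
    have hset : ((Finset.range ℓ).filter fun k => j < p k) = Finset.range (i+1) := by
      ext k
      simp only [mem_range, mem_filter]
      constructor
      · rintro ⟨hkℓ, hk⟩
        by_contra h
        push_neg at h
        have h1 : i + 1 < ℓ := lt_of_le_of_lt h hkℓ
        have h2 := hgap i h1
        have h3 : p k ≤ p (i+1) := hanti h
        omega
      · intro hk
        exact ⟨by omega, lt_of_lt_of_le hj (hanti (by omega))⟩
    unfold conjPart
    rw [hset, Finset.card_range]
  have hsplit : ∀ t : ℤ,
      (((Finset.range ℓ).sigma fun i => Finset.range (p i)).filter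
        fun c => hookLen ℓ p c.1 c.2 = t)
      = (Finset.range ℓ).sigma fun i =>
          (Finset.range (p i)).filter fun j => hookLen ℓ p i j = t := by
    intro t
    ext ⟨i, j⟩
    simp only [Finset.mem_filter, Finset.mem_sigma]
    tauto
  have h1 : ∀ i < ℓ,
      ((Finset.range (p i)).filter fun j => hookLen ℓ p i j = 1) = {p i - 1} := by
    intro i hi
    have hp := hpos i hi
    ext j
    simp only [mem_filter, mem_range, mem_singleton]
    constructor
    · rintro ⟨hj, hh⟩
      have hc := hA i hi j hj
      unfold hookLen at hh
      omega
    · intro hj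
      subst hj
      have hc := hB i hi (p i - 1) (by omega) (by omega)
      refine ⟨by omega, ?_⟩
      unfold hookLen
      rw [hc]
      push_cast
      omega
  have h2 : ∀ i < ℓ,
      ((Finset.range (p i)).filter fun j => hookLen ℓ p i j = 2)
        = if 1 < p i then ({p i - 2} : Finset ℕ) else ∅ := by
    intro i hi
    have hp := hpos i hi
    ext j
    simp only [mem_filter, mem_range]
    constructor
    · rintro ⟨hj, hh⟩
      have hc := hA i hi j hj
      unfold hookLen at hh
      by_cases hje : j = p i - 1
      · exfalso
        subst hje
        have hc1 := hB i hi (p i - 1) (by omega) (by omega)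
        rw [hc1] at hh
        push_cast at hh
        omega
      · have h1p : 1 < p i := by omega
        have hj2 : j = p i - 2 := by omega
        rw [if_pos h1p]
        simp [hj2]
    · intro hmem
      by_cases h1p : 1 < p i
      · rw [if_pos h1p] at hmem
        simp only [mem_singleton] at hmem
        subst hmem
        have hc := hB i hi (p i - 2) (by omega) (by omega)
        refine ⟨by omega, ?_⟩
        unfold hookLen
        rw [hc]
        push_cast
        omega
      · rw [if_neg h1p] at hmem
        simp at hmem
  constructor
  · unfold hookCount
    rw [hsplit, Finset.card_sigma,
      Finset.sum_congr rfl (fun i hi => by rw [h1 i (mem_range.mp hi)])]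
    simp
  · unfold hookCount
    rw [hsplit, Finset.card_sigma,
      Finset.sum_congr rfl (fun i hi => by rw [h2 i (mem_range.mp hi)])]
    rw [Finset.card_filter]
    refine Finset.sum_congr rfl fun i hi => ?_
    split <;> simp
end

section
/- As formal power series in q, ∑_{n≥0} n·q^{n²}/((1−q)(1−q²)⋯(1−qⁿ)) = ∑_{n≥0} r(n) qⁿ, where r(n) is the total number of parts counted over all partitions of n whose successive parts differ by at least 2. -/
/-- A list represents a partition with successive parts differing by at least 2:
all entries positive, and each entry exceeds the next by at least 2. -/
def IsGap2 (L : List ℕ) : Prop :=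
  (∀ x ∈ L, 0 < x) ∧ L.Chain' fun a b => b + 2 ≤ a

/-- `r n` is the total number of parts, counted over all partitions of `n`
whose successive parts differ by at least 2. -/
noncomputable def r (n : ℕ) : ℕ :=
  Nat.card {P : List ℕ × ℕ // IsGap2 P.1 ∧ P.1.sum = n ∧ P.2 < P.1.length}

/-- weighted sum -/
def wsum {n : ℕ} (f : Fin n → ℕ) : ℕ := ∑ i, (i.1 + 1) * f i

def toM : (n : ℕ) → (Fin n → ℕ) → List ℕ
  | 0, _ => []
  | n+1, f => ((f 0 + 2) + (toM n (f ∘ Fin.succ)).headD 0) :: toM n (f ∘ Fin.succ)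

def fromM : List ℕ → ℕ → ℕ
  | [], _ => 0
  | a :: M, 0 => a - 2 - M.headD 0
  | _ :: M, i+1 => fromM M i

def QM (M : List ℕ) : Prop := List.Chain' (fun a b => b + 2 ≤ a) (M ++ [0])

lemma headD_append (M : List ℕ) : (M ++ [0]).headD 0 = M.headD 0 := by
  cases M <;> simp

lemma QM_cons {a : ℕ} {M : List ℕ} : QM (a :: M) ↔ (M.headD 0 + 2 ≤ a ∧ QM M) := by
  unfold QM List.Chain'
  rw [List.cons_append, List.isChain_cons]
  constructor
  · rintro ⟨h1, h2⟩
    refine ⟨?_, h2⟩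
    have := h1 ((M ++ [0]).headD 0) ?_
    · rwa [headD_append] at this
    · cases M <;> simp
  · rintro ⟨h1, h2⟩
    refine ⟨?_, h2⟩
    intro y hy
    have : y = M.headD 0 := by
      cases M <;> simp_all
    omega

lemma QM_nil : QM [] := by simp [QM, List.Chain']

lemma toM_length (n : ℕ) (f : Fin n → ℕ) : (toM n f).length = n := by
  induction n with
  | zero => rfl
  | succ n ih => simp [toM, ih]

lemma toM_headD (n : ℕ) (f : Fin n → ℕ) : (toM n f).headD 0 = 2 * n + ∑ i, f i := by
  induction n with
  | zero => simp [toM]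
  | succ n ih =>
    simp only [toM, List.headD_cons, ih, Fin.sum_univ_succ]
    simp [Function.comp]
    ring

lemma toM_QM (n : ℕ) (f : Fin n → ℕ) : QM (toM n f) := by
  induction n with
  | zero => exact QM_nil
  | succ n ih =>
    rw [toM, QM_cons]
    exact ⟨by omega, ih _⟩

lemma toM_sum (n : ℕ) (f : Fin n → ℕ) : (toM n f).sum = n * (n + 1) + wsum f := by
  induction n with
  | zero => simp [toM, wsum]
  | succ n ih =>
    rw [toM, List.sum_cons, ih, toM_headD]
    unfold wsum
    rw [Fin.sum_univ_succ]
    have key : ∑ i : Fin n, (f ∘ Fin.succ) i + ∑ i : Fin n, ((i : ℕ) + 1) * (f ∘ Fin.succ) i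
        = ∑ i : Fin n, (((Fin.succ i : Fin (n+1)) : ℕ) + 1) * f (Fin.succ i) := by
      rw [← Finset.sum_add_distrib]
      apply Finset.sum_congr rfl
      intro i _
      simp [Function.comp]
      ring
    rw [← key]
    simp only [Fin.val_zero, Function.comp]
    ring

lemma fromM_toM (n : ℕ) (f : Fin n → ℕ) (i : Fin n) : fromM (toM n f) i.1 = f i := by
  induction n with
  | zero => exact i.elim0
  | succ n ih =>
    rcases Fin.eq_zero_or_eq_succ i with h | ⟨j, rfl⟩
    · subst h; simp [toM, fromM]; omega
    · have := ih (f ∘ Fin.succ) j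
      simpa [toM, fromM] using this

lemma toM_fromM (M : List ℕ) (h : QM M) : toM M.length (fun i => fromM M i.1) = M := by
  induction M with
  | nil => rfl
  | cons a M ih =>
    rw [QM_cons] at h
    have h2 := ih h.2
    simp only [List.length_cons, toM]
    have hc : ((fun i : Fin (M.length + 1) => fromM (a :: M) i.1) ∘ Fin.succ)
        = fun i : Fin M.length => fromM M i.1 := by
      funext i; simp [fromM]
    rw [hc, h2]
    simp only [Fin.val_zero, fromM]
    congr 1
    omega

lemma QM_mem {M : List ℕ} (h : QM M) : ∀ x ∈ M, 2 ≤ x := by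
  induction M with
  | nil => simp
  | cons a M ih =>
    rw [QM_cons] at h
    intro x hx
    rcases List.mem_cons.1 hx with rfl | hx
    · omega
    · exact ih h.2 x hx

def mToL (M : List ℕ) : List ℕ := M.map (· - 1)
def lToM (L : List ℕ) : List ℕ := L.map (· + 1)

lemma isGap2_cons {a : ℕ} {L : List ℕ} :
    IsGap2 (a :: L) ↔ (0 < a ∧ (∀ y ∈ L.head?, y + 2 ≤ a) ∧ IsGap2 L) := by
  unfold IsGap2 List.Chain'
  rw [List.isChain_cons, List.forall_mem_cons]
  tauto

lemma isGap2_mToL {M : List ℕ} (h : QM M) : IsGap2 (mToL M) := by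
  induction M with
  | nil => exact ⟨by simp [mToL], by simp [mToL, List.Chain']⟩
  | cons a M ih =>
    have hmem := QM_mem h
    rw [QM_cons] at h
    rw [mToL, List.map_cons, isGap2_cons]
    have h2 : 2 ≤ a := by
      have := hmem a (by simp); omega
    refine ⟨by omega, ?_, ih h.2⟩
    intro y hy
    cases M with
    | nil => simp at hy
    | cons b M' =>
      have hb : 2 ≤ b := hmem b (by simp)
      simp [mToL] at hy h ⊢
      omega

lemma QM_lToM {L : List ℕ} (h : IsGap2 L) : QM (lToM L) := by
  induction L with
  | nil => exact QM_nil
  | cons a L ih =>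
    rw [isGap2_cons] at h
    rw [lToM, List.map_cons, QM_cons]
    refine ⟨?_, ih h.2.2⟩
    cases L with
    | nil => simp [lToM]; omega
    | cons b L' =>
      have := h.2.1 b (by simp)
      simp [lToM]
      omega

lemma mToL_lToM (L : List ℕ) : mToL (lToM L) = L := by
  simp only [mToL, lToM, List.map_map]
  conv_rhs => rw [← List.map_id L]
  apply List.map_congr_left
  intro x _
  simp

lemma lToM_mToL {M : List ℕ} (h : QM M) : lToM (mToL M) = M := by
  have hmem := QM_mem h
  rw [mToL, lToM, List.map_map]
  conv_rhs => rw [← List.map_id M]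
  apply List.map_congr_left
  intro x hx
  have := hmem x hx
  simp [Function.comp]
  omega

lemma lToM_sum (L : List ℕ) : (lToM L).sum = L.sum + L.length := by
  induction L with
  | nil => rfl
  | cons a L ih => simp [lToM] at ih ⊢; omega

lemma mToL_toM_sum (n : ℕ) (f : Fin n → ℕ) :
    (mToL (toM n f)).sum = n ^ 2 + wsum f := by
  have h1 := lToM_sum (mToL (toM n f))
  rw [lToM_mToL (toM_QM n f)] at h1
  have h2 := toM_sum n f
  have h3 : (mToL (toM n f)).length = n := by simp [mToL, toM_length]
  rw [h3] at h1
  have hn : n * (n + 1) = n ^ 2 + n := by ring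
  omega

def EL (n : ℕ) : (Fin n → ℕ) ≃ {L : List ℕ // IsGap2 L ∧ L.length = n} where
  toFun f := ⟨mToL (toM n f), isGap2_mToL (toM_QM n f), by simp [mToL, toM_length]⟩
  invFun L i := fromM (lToM L.1) i.1
  left_inv f := by
    funext i
    simp only [lToM_mToL (toM_QM n f)]
    exact fromM_toM n f i
  right_inv := by
    rintro ⟨L, hL, hn⟩
    subst hn
    apply Subtype.ext
    show mToL (toM L.length (fun i => fromM (lToM L) i.1)) = L
    have hQM := QM_lToM hL
    have hlen : (lToM L).length = L.length := by simp [lToM]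
    rw [← hlen, toM_fromM _ hQM, mToL_lToM]

/-! ### Equivs to the sigma type -/

abbrev SGap : Type := {P : List ℕ × ℕ // IsGap2 P.1 ∧ P.2 < P.1.length}

def DEquiv (n : ℕ) :
    {s : SGap // s.1.1.length = n} ≃ ({L : List ℕ // IsGap2 L ∧ L.length = n} × Fin n) where
  toFun s := (⟨s.1.1.1, s.1.2.1, s.2⟩, ⟨s.1.1.2, by have := s.1.2.2; omega⟩)
  invFun x := ⟨⟨(x.1.1, x.2.1), x.1.2.1, by rw [x.1.2.2]; exact x.2.2⟩, x.1.2.2⟩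
  left_inv s := rfl
  right_inv x := rfl

def bigEquiv : (Σ n : ℕ, ((Fin n → ℕ) × Fin n)) ≃ SGap :=
  (Equiv.sigmaCongrRight
      (fun n => (Equiv.prodCongr (EL n) (Equiv.refl (Fin n))).trans (DEquiv n).symm)).trans
    (Equiv.sigmaFiberEquiv (fun s : SGap => s.1.1.length))

lemma bigEquiv_sum (x : Σ n : ℕ, ((Fin n → ℕ) × Fin n)) :
    (bigEquiv x).1.1.sum = x.1 ^ 2 + wsum x.2.1 := by
  rcases x with ⟨n, f, j⟩
  show (mToL (toM n f)).sum = _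
  exact mToL_toM_sum n f

lemma r_card (m : ℕ) : r m = Nat.card {s : SGap // s.1.1.sum = m} := by
  apply Nat.card_congr
  exact
    { toFun := fun P => ⟨⟨P.1, P.2.1, P.2.2.2⟩, P.2.2.1⟩
      invFun := fun s => ⟨s.1.1, s.1.2.1, s.2, s.1.2.2⟩
      left_inv := fun P => rfl
      right_inv := fun s => rfl }

/-! ### Analytic lemmas -/

lemma pi_summable {t : ℝ} (ht0 : 0 ≤ t) (ht : t < 1) :
    ∀ (n : ℕ) (w : Fin n → ℕ), (∀ i, 1 ≤ w i) →
      Summable (fun f : Fin n → ℕ => t ^ (∑ i, w i * f i)) := by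
  intro n
  induction n with
  | zero => intro w _; exact Summable.of_finite
  | succ n ih =>
    intro w hw
    rw [← (Fin.consEquiv (fun _ : Fin (n+1) => ℕ)).summable_iff]
    have h1 : Summable (fun k : ℕ => t ^ (w 0 * k)) := by
      have : ∀ k : ℕ, t ^ (w 0 * k) = (t ^ (w 0)) ^ k := by
        intro k; rw [← pow_mul]
      simp only [this]
      exact summable_geometric_of_lt_one (pow_nonneg ht0 _)
        (pow_lt_one₀ ht0 ht (by have := hw 0; omega))
    have h2 := ih (w ∘ Fin.succ) (fun i => hw _)
    have h3 : Summable (fun z : ℕ × (Fin n → ℕ) =>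
        t ^ (w 0 * z.1) * t ^ (∑ i, (w ∘ Fin.succ) i * z.2 i)) := by
      apply summable_mul_of_summable_norm (f := fun k : ℕ => t ^ (w 0 * k))
        (g := fun f : Fin n → ℕ => t ^ (∑ i, (w ∘ Fin.succ) i * f i))
      · simpa [Real.norm_eq_abs, abs_pow, abs_of_nonneg ht0] using h1
      · simpa [Real.norm_eq_abs, abs_pow, abs_of_nonneg ht0] using h2
    apply h3.congr
    intro z
    simp only [Fin.consEquiv, Equiv.coe_fn_mk]
    rw [← pow_add]
    congr 1
    rw [Fin.sum_univ_succ]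
    simp [Fin.cons_zero, Fin.cons_succ, Function.comp]

lemma geom_norm_summable {q : ℝ} (hq : |q| < 1) {m : ℕ} (hm : 1 ≤ m) :
    Summable (fun k : ℕ => ‖q ^ (m * k)‖) := by
  have : ∀ k : ℕ, ‖q ^ (m * k)‖ = (|q| ^ m) ^ k := by
    intro k; rw [Real.norm_eq_abs, abs_pow, ← pow_mul]
  simp only [this]
  exact summable_geometric_of_lt_one (pow_nonneg (abs_nonneg q) _)
    (pow_lt_one₀ (abs_nonneg q) hq (by omega))

lemma geom_tsum {q : ℝ} (hq : |q| < 1) {m : ℕ} (hm : 1 ≤ m) :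
    ∑' k : ℕ, q ^ (m * k) = (1 - q ^ m)⁻¹ := by
  have : ∀ k : ℕ, q ^ (m * k) = (q ^ m) ^ k := by
    intro k; rw [← pow_mul]
  simp only [this]
  exact tsum_geometric_of_norm_lt_one (by
    rw [Real.norm_eq_abs, abs_pow]
    exact pow_lt_one₀ (abs_nonneg q) hq (by omega))

set_option maxHeartbeats 1000000 in
lemma pi_tsum {q : ℝ} (hq : |q| < 1) :
    ∀ (n : ℕ) (w : Fin n → ℕ), (∀ i, 1 ≤ w i) →
      ∑' f : Fin n → ℕ, q ^ (∑ i, w i * f i) = ∏ i, (1 - q ^ (w i))⁻¹ := by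
  intro n
  induction n with
  | zero =>
    intro w _
    rw [tsum_eq_single (default : Fin 0 → ℕ)
      (fun b' hb' => absurd (Subsingleton.elim b' default) hb')]
    simp
  | succ n ih =>
    intro w hw
    have e := (Fin.consEquiv (fun _ : Fin (n+1) => ℕ))
    rw [← ((Fin.consEquiv (fun _ : Fin (n+1) => ℕ)).tsum_eq (fun f => q ^ (∑ i, w i * f i)))]
    have hsplit : ∀ z : ℕ × (Fin n → ℕ),
        q ^ (∑ i, w i * ((Fin.consEquiv (fun _ : Fin (n+1) => ℕ)) z) i)
          = q ^ (w 0 * z.1) * q ^ (∑ i, (w ∘ Fin.succ) i * z.2 i) := by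
      intro z
      rw [← pow_add]
      congr 1
      rw [Fin.sum_univ_succ]
      simp [Function.comp]
    rw [tsum_congr hsplit]
    have hg : Summable (fun f : Fin n → ℕ => ‖q ^ (∑ i, (w ∘ Fin.succ) i * f i)‖) := by
      have := pi_summable (abs_nonneg q) hq n (w ∘ Fin.succ) (fun i => hw _)
      simpa [Real.norm_eq_abs, abs_pow] using this
    have hf := geom_norm_summable hq (m := w 0) (hw 0)
    have hprod : Summable (fun z : ℕ × (Fin n → ℕ) =>
        q ^ (w 0 * z.1) * q ^ (∑ i, (w ∘ Fin.succ) i * z.2 i)) := by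
      apply summable_mul_of_summable_norm (f := fun k : ℕ => q ^ (w 0 * k))
        (g := fun f : Fin n → ℕ => q ^ (∑ i, (w ∘ Fin.succ) i * f i)) hf hg
    have hrw : ∑' z : ℕ × (Fin n → ℕ), q ^ (w 0 * z.1) * q ^ (∑ i, (w ∘ Fin.succ) i * z.2 i)
        = ∑' k : ℕ, ∑' f : Fin n → ℕ, q ^ (w 0 * k) * q ^ (∑ i, (w ∘ Fin.succ) i * f i) := by
      refine Summable.tsum_prod' hprod (fun k => ?_)
      exact Summable.mul_left (q ^ (w 0 * k)) hg.of_norm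
    rw [hrw]
    have : ∀ k : ℕ, ∑' f : Fin n → ℕ, q ^ (w 0 * k) * q ^ (∑ i, (w ∘ Fin.succ) i * f i)
        = q ^ (w 0 * k) * ∏ i : Fin n, (1 - q ^ ((w ∘ Fin.succ) i))⁻¹ := by
      intro k
      rw [tsum_mul_left, ih (w ∘ Fin.succ) (fun i => hw _)]
    rw [tsum_congr this, tsum_mul_right, geom_tsum hq (hw 0), Fin.prod_univ_succ]
    simp [Function.comp]

lemma wsum_tsum {q : ℝ} (hq : |q| < 1) (n : ℕ) :
    ∑' f : Fin n → ℕ, q ^ (wsum f) = ∏ i ∈ Finset.range n, (1 - q ^ (i + 1))⁻¹ := by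
  have h := pi_tsum hq n (fun i => i.1 + 1) (fun i => Nat.le_add_left 1 _)
  have h2 : ∏ i : Fin n, (1 - q ^ (i.1 + 1))⁻¹ = ∏ i ∈ Finset.range n, (1 - q ^ (i + 1))⁻¹ :=
    Fin.prod_univ_eq_prod_range (fun i => (1 - q ^ (i + 1))⁻¹) n
  rw [← h2, ← h]
  rfl

lemma wsum_summable {t : ℝ} (ht0 : 0 ≤ t) (ht : t < 1) (n : ℕ) :
    Summable (fun f : Fin n → ℕ => t ^ (wsum f)) :=
  pi_summable ht0 ht n (fun i => i.1 + 1) (fun i => Nat.le_add_left 1 _)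

lemma summable_fst {α : Type*} {F : α → ℝ} (hF : Summable (fun a => ‖F a‖)) (n : ℕ) :
    Summable (fun p : α × Fin n => F p.1) := by
  have h1 : Summable (fun j : Fin n => ‖(1 : ℝ)‖) := Summable.of_finite
  have h2 := summable_mul_of_summable_norm (f := F) (g := fun _ : Fin n => (1 : ℝ))
    (by simpa using hF) h1
  apply h2.congr
  intro z
  simp

lemma tsum_prod_fin {α : Type*} (F : α → ℝ) (n : ℕ) (hF : Summable (fun p : α × Fin n => F p.1)) :
    ∑' p : α × Fin n, F p.1 = n * ∑' a, F a := by
  rw [Summable.tsum_prod' hF (fun a => Summable.of_finite)]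
  have : ∀ a : α, ∑' _ : Fin n, F a = (n : ℝ) * F a := by
    intro a
    rw [tsum_fintype]
    simp [Finset.sum_const, nsmul_eq_mul]
  rw [tsum_congr this, tsum_mul_left]

lemma fiber_summable {q : ℝ} (hq : |q| < 1) (n : ℕ) :
    Summable (fun p : (Fin n → ℕ) × Fin n => q ^ (n ^ 2 + wsum p.1)) := by
  apply summable_fst (F := fun f : Fin n → ℕ => q ^ (n ^ 2 + wsum f))
  have := (wsum_summable (abs_nonneg q) hq n).mul_left (|q| ^ (n ^ 2))
  apply this.congr
  intro f
  simp [Real.norm_eq_abs, abs_pow, pow_add]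

lemma fiber_tsum {q : ℝ} (hq : |q| < 1) (n : ℕ) :
    ∑' p : (Fin n → ℕ) × Fin n, q ^ (n ^ 2 + wsum p.1)
      = n * (q ^ (n ^ 2) * ∏ i ∈ Finset.range n, (1 - q ^ (i + 1))⁻¹) := by
  rw [tsum_prod_fin (fun f : Fin n → ℕ => q ^ (n ^ 2 + wsum f)) n (fiber_summable hq n)]
  congr 1
  have : ∀ f : Fin n → ℕ, q ^ (n ^ 2 + wsum f) = q ^ (n ^ 2) * q ^ (wsum f) := by
    intro f; rw [pow_add]
  rw [tsum_congr this, tsum_mul_left, wsum_tsum hq n]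

lemma prod_inv_nonneg {t : ℝ} (ht0 : 0 ≤ t) (ht : t < 1) (n : ℕ) :
    0 ≤ ∏ i ∈ Finset.range n, (1 - t ^ (i + 1))⁻¹ := by
  apply Finset.prod_nonneg
  intro i _
  have : t ^ (i + 1) ≤ 1 := pow_le_one₀ ht0 ht.le
  have : 0 ≤ 1 - t ^ (i + 1) := by linarith
  positivity

lemma prod_inv_le {t : ℝ} (ht0 : 0 ≤ t) (ht : t < 1) (n : ℕ) :
    ∏ i ∈ Finset.range n, (1 - t ^ (i + 1))⁻¹ ≤ ((1 - t)⁻¹) ^ n := by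
  have : ((1 - t)⁻¹) ^ n = ∏ _i ∈ Finset.range n, (1 - t)⁻¹ := by
    simp [Finset.prod_const]
  rw [this]
  apply Finset.prod_le_prod
  · intro i _
    have : t ^ (i + 1) ≤ 1 := pow_le_one₀ ht0 ht.le
    have : 0 ≤ 1 - t ^ (i + 1) := by linarith
    positivity
  · intro i _
    have h1 : 0 < 1 - t := by linarith
    have h2 : t ^ (i + 1) ≤ t := by
      calc t ^ (i + 1) ≤ t ^ 1 := pow_le_pow_of_le_one ht0 ht.le (by omega)
        _ = t := pow_one t
    have h3 : 1 - t ≤ 1 - t ^ (i + 1) := by linarith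
    exact inv_anti₀ h1 h3

lemma master_summable {t : ℝ} (ht0 : 0 ≤ t) (ht : t < 1) :
    Summable (fun x : Σ n : ℕ, ((Fin n → ℕ) × Fin n) => t ^ (x.1 ^ 2 + wsum x.2.1)) := by
  have htabs : |t| < 1 := by rwa [abs_of_nonneg ht0]
  refine (summable_sigma_of_nonneg (fun x => pow_nonneg ht0 _)).2
    ⟨fun n => fiber_summable htabs n, ?_⟩
  have hrw : ∀ n : ℕ, ∑' p : (Fin n → ℕ) × Fin n, t ^ (n ^ 2 + wsum p.1)
      = n * (t ^ (n ^ 2) * ∏ i ∈ Finset.range n, (1 - t ^ (i + 1))⁻¹) :=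
    fun n => fiber_tsum htabs n
  refine Summable.congr ?_ (fun n => (hrw n).symm)
  have h1t : 0 < 1 - t := by linarith
  obtain ⟨N, hN⟩ : ∃ N : ℕ, ∀ n ≥ N, t ^ n < (1 - t) / 2 := by
    have h := tendsto_pow_atTop_nhds_zero_of_lt_one ht0 ht
    have h2 := h.eventually (gt_mem_nhds (show 0 < (1 - t) / 2 by linarith))
    rw [Filter.eventually_atTop] at h2
    obtain ⟨N, hN⟩ := h2
    exact ⟨N, fun n hn => hN n hn⟩
  have hgnn : ∀ n : ℕ, 0 ≤ (n : ℝ) * (t ^ (n ^ 2) * ∏ i ∈ Finset.range n, (1 - t ^ (i + 1))⁻¹) := by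
    intro n
    have := prod_inv_nonneg ht0 ht n
    positivity
  have hgb : ∀ n, N ≤ n →
      (n : ℝ) * (t ^ (n ^ 2) * ∏ i ∈ Finset.range n, (1 - t ^ (i + 1))⁻¹)
        ≤ n * (1 / 2 : ℝ) ^ n := by
    intro n hn
    have hP := prod_inv_le ht0 ht n
    have htn : t ^ n * (1 - t)⁻¹ ≤ 1 / 2 := by
      have h2 : t ^ n ≤ (1 - t) / 2 := le_of_lt (hN n hn)
      calc t ^ n * (1 - t)⁻¹ ≤ (1 - t) / 2 * (1 - t)⁻¹ :=
            mul_le_mul_of_nonneg_right h2 (inv_nonneg.2 h1t.le)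
        _ = 1 / 2 := by field_simp
    have hpow : t ^ (n ^ 2) * ((1 - t)⁻¹) ^ n = (t ^ n * (1 - t)⁻¹) ^ n := by
      rw [mul_pow, ← pow_mul, sq]
    calc (n : ℝ) * (t ^ (n ^ 2) * ∏ i ∈ Finset.range n, (1 - t ^ (i + 1))⁻¹)
        ≤ n * (t ^ (n ^ 2) * ((1 - t)⁻¹) ^ n) := by
          apply mul_le_mul_of_nonneg_left _ (Nat.cast_nonneg n)
          exact mul_le_mul_of_nonneg_left hP (pow_nonneg ht0 _)
      _ = n * (t ^ n * (1 - t)⁻¹) ^ n := by rw [hpow]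
      _ ≤ n * (1 / 2 : ℝ) ^ n := by
          apply mul_le_mul_of_nonneg_left _ (Nat.cast_nonneg n)
          exact pow_le_pow_left₀ (mul_nonneg (pow_nonneg ht0 _) (inv_nonneg.2 h1t.le)) htn n
  have hhalf : Summable (fun n : ℕ => (n : ℝ) * (1 / 2) ^ n) := by
    have h := summable_pow_mul_geometric_of_norm_lt_one (R := ℝ) 1 (r := (1 : ℝ) / 2)
      (by rw [Real.norm_eq_abs, abs_of_nonneg (by norm_num : (0:ℝ) ≤ 1/2)]; norm_num)
    apply h.congr
    intro n
    simp [pow_one]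
  apply (summable_nat_add_iff N).1
  apply Summable.of_nonneg_of_le (fun n => hgnn (n + N))
    (fun n => hgb (n + N) (Nat.le_add_left N n))
  exact (summable_nat_add_iff N).2 hhalf

set_option maxHeartbeats 2000000 in
theorem sum_parts_gap2_gen_fun (q : ℝ) (hq : |q| < 1) :
    ∑' n : ℕ, (n : ℝ) * q ^ (n ^ 2) / ∏ i ∈ Finset.range n, (1 - q ^ (i + 1)) =
      ∑' n : ℕ, (r n : ℝ) * q ^ n := by
  classical
  have hmaster_abs := master_summable (abs_nonneg q) hq
  have hmasterq : Summable
      (fun x : Σ n : ℕ, ((Fin n → ℕ) × Fin n) => q ^ (x.1 ^ 2 + wsum x.2.1)) := by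
    apply Summable.of_abs
    apply hmaster_abs.congr
    intro x
    rw [abs_pow]
  have hS : Summable (fun s : SGap => q ^ s.1.1.sum) := by
    rw [← bigEquiv.summable_iff]
    apply hmasterq.congr
    intro x
    simp only [Function.comp_apply, bigEquiv_sum]
  have hLHS : ∑' n : ℕ, (n : ℝ) * q ^ (n ^ 2) / ∏ i ∈ Finset.range n, (1 - q ^ (i + 1))
      = ∑' s : SGap, q ^ s.1.1.sum := by
    rw [← bigEquiv.tsum_eq (fun s : SGap => q ^ s.1.1.sum)]
    have h1 : ∀ x : Σ n : ℕ, ((Fin n → ℕ) × Fin n),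
        q ^ (bigEquiv x).1.1.sum = q ^ (x.1 ^ 2 + wsum x.2.1) :=
      fun x => by rw [bigEquiv_sum]
    rw [tsum_congr h1, Summable.tsum_sigma hmasterq]
    apply tsum_congr
    intro n
    rw [show (fun c : (Fin n → ℕ) × Fin n => q ^ (n ^ 2 + wsum c.1))
        = (fun p : (Fin n → ℕ) × Fin n => q ^ (n ^ 2 + wsum p.1)) from rfl]
    rw [fiber_tsum hq n, div_eq_mul_inv, ← Finset.prod_inv_distrib, mul_assoc]
  have hRHS : ∑' m : ℕ, (r m : ℝ) * q ^ m = ∑' s : SGap, q ^ s.1.1.sum := by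
    set e2 := Equiv.sigmaFiberEquiv (fun s : SGap => s.1.1.sum) with he2
    rw [← e2.tsum_eq (fun s : SGap => q ^ s.1.1.sum)]
    have hsig : Summable
        (fun x : Σ m : ℕ, {s : SGap // s.1.1.sum = m} => q ^ (e2 x).1.1.sum) :=
      e2.summable_iff.2 hS
    rw [Summable.tsum_sigma hsig]
    apply tsum_congr
    intro m
    have h3 : ∀ s : {s : SGap // s.1.1.sum = m},
        q ^ (e2 ⟨m, s⟩).1.1.sum = q ^ m := by
      intro s
      congr 1
      rw [he2]
      exact s.2
    rw [tsum_congr h3, tsum_const, ← r_card m, nsmul_eq_mul]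
  rw [hLHS, ← hRHS]
end

section
/- As formal power series in q, the generating function ∑_{n≥0} r_{2,1}(n) qⁿ for the total number of distinct part sizes over all partitions of n into parts congruent to 1 or 4 mod 5 equals (q + q⁴)/((1 − q⁵) · ∏_{n ≡ 1,4 (mod 5)}(1 − qⁿ)). -/
open Finset

def Ap (n : ℕ) : Prop := n % 5 = 1 ∨ n % 5 = 4

instance : DecidablePred Ap := fun n => inferInstanceAs (Decidable (_ ∨ _))

lemma Ap.one_le {n : ℕ} (h : Ap n) : 1 ≤ n := by
  rcases Nat.eq_zero_or_pos n with h0 | h1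
  · subst h0; rcases h with h | h <;> simp at h
  · exact h1

def wt (f : ℕ →₀ ℕ) : ℕ := f.sum fun m k => m * k

lemma wt_add (f g : ℕ →₀ ℕ) : wt (f + g) = wt f + wt g :=
  Finsupp.sum_add_index' (fun a => Nat.mul_zero a) (fun a b c => Nat.mul_add a b c)

lemma wt_single (j k : ℕ) : wt (Finsupp.single j k) = j * k :=
  Finsupp.sum_single_index (Nat.mul_zero j)

lemma le_wt {f : ℕ →₀ ℕ} {m : ℕ} (h : m ∈ f.support) : m * f m ≤ wt f := by
  rw [wt, Finsupp.sum]
  exact Finset.single_le_sum (f := fun a => a * f a) (fun _ _ => Nat.zero_le _) h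

lemma mem_le_wt {f : ℕ →₀ ℕ} {m : ℕ} (h : m ∈ f.support) (hm : 1 ≤ m) : m ≤ wt f := by
  have h1 : 1 ≤ f m := Nat.one_le_iff_ne_zero.mpr (Finsupp.mem_support_iff.mp h)
  calc m = m * 1 := (Nat.mul_one m).symm
    _ ≤ m * f m := Nat.mul_le_mul_left m h1
    _ ≤ wt f := le_wt h

/-- finiteness of multiplicity functions of bounded weight -/
lemma finite_wt (n : ℕ) : Finite {f : ℕ →₀ ℕ // f 0 = 0 ∧ wt f = n} := by
  have key : ∀ f : {f : ℕ →₀ ℕ // f 0 = 0 ∧ wt f = n}, ∀ m : ℕ, (f : ℕ →₀ ℕ) m ≤ n := by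
    rintro ⟨f, hf0, hw⟩ m
    by_cases hm : f m = 0
    · simp [hm]
    · have hs : m ∈ f.support := Finsupp.mem_support_iff.mpr hm
      have hm1 : 1 ≤ m := by
        rcases Nat.eq_zero_or_pos m with h0 | h1
        · exact absurd (h0 ▸ hf0) hm
        · exact h1
      calc f m = 1 * f m := (Nat.one_mul _).symm
        _ ≤ m * f m := Nat.mul_le_mul_right _ hm1
        _ ≤ wt f := le_wt hs
        _ = n := hw
  have supp : ∀ f : {f : ℕ →₀ ℕ // f 0 = 0 ∧ wt f = n}, ∀ m : ℕ, n < m → (f : ℕ →₀ ℕ) m = 0 := by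
    rintro ⟨f, hf0, hw⟩ m hm
    by_contra hne
    have hs : m ∈ f.support := Finsupp.mem_support_iff.mpr hne
    have hm1 : 1 ≤ m := le_trans (Nat.succ_le_succ (Nat.zero_le n)) hm
    have := mem_le_wt hs hm1
    omega
  apply Finite.of_injective (fun f : {f : ℕ →₀ ℕ // f 0 = 0 ∧ wt f = n} =>
    (fun i : Fin (n+1) => (⟨f.1 i, Nat.lt_succ_of_le (key f i)⟩ : Fin (n+1))))
  rintro f g hfg
  ext m
  show f.1 m = g.1 m
  rcases le_or_gt m n with hm | hm
  · have := congrFun hfg ⟨m, Nat.lt_succ_of_le hm⟩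
    simpa using this
  · rw [supp f m hm, supp g m hm]

noncomputable def pc (n : ℕ) : ℕ :=
  Nat.card {f : ℕ →₀ ℕ // (∀ m ∈ f.support, Ap m) ∧ wt f = n}

noncomputable def cc (N n : ℕ) : ℕ :=
  Nat.card {f : ℕ →₀ ℕ // (∀ m ∈ f.support, Ap m ∧ m < N) ∧ wt f = n}

lemma f0_of_Ap {f : ℕ →₀ ℕ} (h : ∀ m ∈ f.support, Ap m) : f 0 = 0 := by
  by_contra hne
  have := (h 0 (Finsupp.mem_support_iff.mpr hne)).one_le
  omega

instance finite_p (n : ℕ) : Finite {f : ℕ →₀ ℕ // (∀ m ∈ f.support, Ap m) ∧ wt f = n} := by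
  have := finite_wt n
  apply Finite.of_injective (fun f : {f : ℕ →₀ ℕ // (∀ m ∈ f.support, Ap m) ∧ wt f = n} =>
    (⟨f.1, f0_of_Ap f.2.1, f.2.2⟩ : {f : ℕ →₀ ℕ // f 0 = 0 ∧ wt f = n}))
  rintro f g hfg
  exact Subtype.ext (by simpa using congrArg Subtype.val hfg)

instance finite_c (N n : ℕ) : Finite {f : ℕ →₀ ℕ // (∀ m ∈ f.support, Ap m ∧ m < N) ∧ wt f = n} := by
  have := finite_p n
  apply Finite.of_injective (fun f : {f : ℕ →₀ ℕ // (∀ m ∈ f.support, Ap m ∧ m < N) ∧ wt f = n} =>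
    (⟨f.1, fun m hm => (f.2.1 m hm).1, f.2.2⟩ :
      {f : ℕ →₀ ℕ // (∀ m ∈ f.support, Ap m) ∧ wt f = n}))
  rintro f g hfg
  exact Subtype.ext (by simpa using congrArg Subtype.val hfg)

lemma cc_le_pc (N n : ℕ) : cc N n ≤ pc n :=
  Nat.card_le_card_of_injective
    (fun f : {f : ℕ →₀ ℕ // (∀ m ∈ f.support, Ap m ∧ m < N) ∧ wt f = n} =>
      (⟨f.1, fun m hm => (f.2.1 m hm).1, f.2.2⟩ :
      {f : ℕ →₀ ℕ // (∀ m ∈ f.support, Ap m) ∧ wt f = n}))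
    (fun f g hfg => Subtype.ext (by simpa using congrArg Subtype.val hfg))

lemma cc_zero (n : ℕ) : cc 0 n = if n = 0 then 1 else 0 := by
  split_ifs with h
  · subst h
    rw [cc, Nat.card_eq_one_iff_unique]
    constructor
    · constructor
      rintro ⟨f, hf, hw⟩ ⟨g, hg, hw'⟩
      have hf0 : f = 0 := by
        ext m; by_contra hne
        exact absurd ((hf m (Finsupp.mem_support_iff.mpr hne)).2) (Nat.not_lt_zero m)
      have hg0 : g = 0 := by
        ext m; by_contra hne
        exact absurd ((hg m (Finsupp.mem_support_iff.mpr hne)).2) (Nat.not_lt_zero m)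
      subst hf0 hg0; rfl
    · exact ⟨⟨0, by simp, by simp [wt]⟩⟩
  · rw [cc, Nat.card_eq_zero]
    left
    constructor
    rintro ⟨f, hf, hw⟩
    have hf0 : f = 0 := by
      ext m; by_contra hne
      exact absurd ((hf m (Finsupp.mem_support_iff.mpr hne)).2) (Nat.not_lt_zero m)
    subst hf0
    exact h (by simpa [wt] using hw.symm)

lemma cc_eq_pc {N n : ℕ} (h : n < N) : cc N n = pc n := by
  apply Nat.card_congr
  apply Equiv.subtypeEquivRight
  intro f
  constructor
  · rintro ⟨h1, h2⟩; exact ⟨fun m hm => (h1 m hm).1, h2⟩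
  · rintro ⟨h1, h2⟩
    refine ⟨fun m hm => ⟨h1 m hm, ?_⟩, h2⟩
    have := mem_le_wt hm (h1 m hm).one_le
    omega

lemma cc_succ_not {N : ℕ} (h : ¬ Ap N) (n : ℕ) : cc (N+1) n = cc N n := by
  apply Nat.card_congr
  apply Equiv.subtypeEquivRight
  intro f
  constructor
  · rintro ⟨h1, h2⟩
    refine ⟨fun m hm => ⟨(h1 m hm).1, ?_⟩, h2⟩
    have := (h1 m hm).2
    have hne : m ≠ N := fun he => h (he ▸ (h1 m hm).1)
    omega
  · rintro ⟨h1, h2⟩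
    exact ⟨fun m hm => ⟨(h1 m hm).1, Nat.lt_succ_of_lt (h1 m hm).2⟩, h2⟩

lemma nat_card_sigma {ι : Type*} [Fintype ι] (T : ι → Type*) [∀ i, Finite (T i)] :
    Nat.card (Σ i, T i) = ∑ i, Nat.card (T i) := by
  letI : ∀ i, Fintype (T i) := fun i => Fintype.ofFinite _
  simp [Nat.card_eq_fintype_card, Fintype.card_sigma]

lemma cc_succ (N : ℕ) (hA : Ap N) (n : ℕ) :
    cc (N+1) n = ∑ i ∈ (range (n+1)).filter (N ∣ ·), cc N (n - i) := by
  classical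
  have hN0 : 0 < N := hA.one_le
  set s := (range (n+1)).filter (N ∣ ·) with hs
  have Φprop : ∀ x : (Σ i : s, {g : ℕ →₀ ℕ // (∀ m ∈ g.support, Ap m ∧ m < N) ∧ wt g = n - i.1}),
      (∀ m ∈ (x.2.1 + Finsupp.single N (x.1.1 / N)).support, Ap m ∧ m < N + 1) ∧
        wt (x.2.1 + Finsupp.single N (x.1.1 / N)) = n := by
    rintro ⟨⟨i, hi⟩, ⟨g, hg⟩⟩
    simp only [Finset.mem_filter, Finset.mem_range, hs] at hi
    obtain ⟨hin, hdvd⟩ := hi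
    constructor
    · intro m hm
      rcases Finset.mem_union.mp (Finsupp.support_add hm) with h | h
      · exact ⟨(hg.1 m h).1, Nat.lt_succ_of_lt (hg.1 m h).2⟩
      · have hmN : m = N := Finset.mem_singleton.mp (Finsupp.support_single_subset h)
        exact ⟨by rw [hmN]; exact hA, by omega⟩
    · simp only [wt_add, wt_single, hg.2, Nat.mul_div_cancel' hdvd]
      omega
  set Φ : (Σ i : s, {g : ℕ →₀ ℕ // (∀ m ∈ g.support, Ap m ∧ m < N) ∧ wt g = n - i.1}) →
      {f : ℕ →₀ ℕ // (∀ m ∈ f.support, Ap m ∧ m < N + 1) ∧ wt f = n} :=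
    fun x => ⟨x.2.1 + Finsupp.single N (x.1.1 / N), Φprop x⟩ with hΦdef
  have hinj : Function.Injective Φ := by
    rintro ⟨⟨i, hi⟩, ⟨g, hg⟩⟩ ⟨⟨i', hi'⟩, ⟨g', hg'⟩⟩ hΦ
    have hval : g + Finsupp.single N (i / N) = g' + Finsupp.single N (i' / N) :=
      congrArg Subtype.val hΦ
    have hgN : g N = 0 := by
      by_contra hne
      exact absurd (hg.1 N (Finsupp.mem_support_iff.mpr hne)).2 (lt_irrefl N)
    have hgN' : g' N = 0 := by
      by_contra hne
      exact absurd (hg'.1 N (Finsupp.mem_support_iff.mpr hne)).2 (lt_irrefl N)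
    have hdvd : N ∣ i := (Finset.mem_filter.mp hi).2
    have hdvd' : N ∣ i' := (Finset.mem_filter.mp hi').2
    have hii : i = i' := by
      have := congrArg (fun f => N * f N) hval
      simpa [Finsupp.add_apply, hgN, hgN', Nat.mul_div_cancel' hdvd,
        Nat.mul_div_cancel' hdvd'] using this
    subst hii
    have : g = g' := add_right_cancel hval
    subst this
    rfl
  have hsurj : Function.Surjective Φ := by
    rintro ⟨f, hAf, hw⟩
    have hNi : N * f N ≤ n := by
      by_cases hfN : f N = 0
      · simp [hfN]
      · have := le_wt (Finsupp.mem_support_iff.mpr hfN)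
        omega
    have hmem : N * f N ∈ s := by
      simp only [hs, Finset.mem_filter, Finset.mem_range]
      exact ⟨Nat.lt_succ_of_le hNi, Dvd.intro _ rfl⟩
    have hwe : wt (f.erase N) + N * f N = n := by
      have := congrArg wt (Finsupp.erase_add_single N f)
      rw [wt_add, wt_single] at this
      omega
    refine ⟨⟨⟨N * f N, hmem⟩, ⟨f.erase N, ⟨?_, ?_⟩⟩⟩, ?_⟩
    · intro m hm
      rw [Finsupp.support_erase, Finset.mem_erase] at hm
      have h2 := hAf m hm.2
      exact ⟨h2.1, by omega⟩
    · show wt (f.erase N) = n - N * f N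
      omega
    · apply Subtype.ext
      show f.erase N + Finsupp.single N (N * f N / N) = f
      rw [Nat.mul_div_cancel_left _ hN0, Finsupp.erase_add_single]
  have key : cc (N+1) n = Nat.card
      (Σ i : s, {g : ℕ →₀ ℕ // (∀ m ∈ g.support, Ap m ∧ m < N) ∧ wt g = n - i.1}) :=
    (Nat.card_eq_of_bijective Φ ⟨hinj, hsurj⟩).symm
  rw [key, nat_card_sigma]
  rw [← Finset.sum_coe_sort s (fun i => cc N (n - i))]
  rfl

/-- `r21 n` : total number of distinct part sizes over all partitions of `n`
into parts congruent to 1 or 4 modulo 5 (partitions encoded by multiplicity functions). -/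
noncomputable def r21 (n : ℕ) : ℕ :=
  Nat.card {P : (ℕ →₀ ℕ) × ℕ //
    (∀ m ∈ P.1.support, m % 5 = 1 ∨ m % 5 = 4) ∧
      (P.1.sum fun m k => m * k) = n ∧ P.2 ∈ P.1.support}

lemma r21_eq (n : ℕ) : r21 n = ∑ j ∈ (range (n+1)).filter Ap, pc (n - j) := by
  classical
  set s := (range (n+1)).filter Ap with hs
  have Φprop : ∀ x : (Σ j : s, {g : ℕ →₀ ℕ // (∀ m ∈ g.support, Ap m) ∧ wt g = n - j.1}),
      (∀ m ∈ (x.2.1 + Finsupp.single x.1.1 1).support, Ap m) ∧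
        wt (x.2.1 + Finsupp.single x.1.1 1) = n ∧ x.1.1 ∈ (x.2.1 + Finsupp.single x.1.1 1).support := by
    rintro ⟨⟨j, hj⟩, ⟨g, hg⟩⟩
    simp only [Finset.mem_filter, Finset.mem_range, hs] at hj
    obtain ⟨hjn, hAj⟩ := hj
    refine ⟨?_, ?_, ?_⟩
    · intro m hm
      rcases Finset.mem_union.mp (Finsupp.support_add hm) with h | h
      · exact hg.1 m h
      · have hmj : m = j := Finset.mem_singleton.mp (Finsupp.support_single_subset h)
        rw [hmj]; exact hAj
    · simp only [wt_add, wt_single, hg.2]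
      omega
    · rw [Finsupp.mem_support_iff]
      simp [Finsupp.add_apply]
  set Φ : (Σ j : s, {g : ℕ →₀ ℕ // (∀ m ∈ g.support, Ap m) ∧ wt g = n - j.1}) →
      {P : (ℕ →₀ ℕ) × ℕ //
        (∀ m ∈ P.1.support, m % 5 = 1 ∨ m % 5 = 4) ∧
          (P.1.sum fun m k => m * k) = n ∧ P.2 ∈ P.1.support} :=
    fun x => ⟨(x.2.1 + Finsupp.single x.1.1 1, x.1.1), Φprop x⟩ with hΦdef
  have hinj : Function.Injective Φ := by
    rintro ⟨⟨j, hj⟩, ⟨g, hg⟩⟩ ⟨⟨j', hj'⟩, ⟨g', hg'⟩⟩ hΦ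
    have hval : (g + Finsupp.single j 1, j) = (g' + Finsupp.single j' 1, j') :=
      congrArg Subtype.val hΦ
    rw [Prod.ext_iff] at hval
    obtain ⟨hfe, hje⟩ := hval
    simp only at hfe hje
    have hjj : j = j' := hje
    subst hjj
    have : g = g' := add_right_cancel hfe
    subst this
    rfl
  have hsurj : Function.Surjective Φ := by
    rintro ⟨⟨f, j⟩, hAf, hw, hjs⟩
    have hfj : 1 ≤ f j := Nat.one_le_iff_ne_zero.mpr (Finsupp.mem_support_iff.mp hjs)
    have hAj : Ap j := hAf j hjs
    have hjn : j ≤ n := by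
      have := mem_le_wt hjs hAj.one_le
      exact hw ▸ this
    have hle : Finsupp.single j 1 ≤ f := Finsupp.single_le_iff.mpr hfj
    have hsum : f - Finsupp.single j 1 + Finsupp.single j 1 = f := tsub_add_cancel_of_le hle
    have hwg : wt (f - Finsupp.single j 1) = n - j := by
      have := congrArg wt hsum
      rw [wt_add, wt_single] at this
      have hw' : wt f = n := hw
      omega
    have hmem : j ∈ s := by
      simp only [hs, Finset.mem_filter, Finset.mem_range]
      exact ⟨Nat.lt_succ_of_le hjn, hAj⟩
    refine ⟨⟨⟨j, hmem⟩, ⟨f - Finsupp.single j 1, ⟨?_, hwg⟩⟩⟩, ?_⟩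
    · intro m hm
      exact hAf m (Finsupp.support_tsub hm)
    · apply Subtype.ext
      show (f - Finsupp.single j 1 + Finsupp.single j 1, j) = (f, j)
      rw [hsum]
  have key : r21 n = Nat.card
      (Σ j : s, {g : ℕ →₀ ℕ // (∀ m ∈ g.support, Ap m) ∧ wt g = n - j.1}) :=
    (Nat.card_eq_of_bijective Φ ⟨hinj, hsurj⟩).symm
  rw [key, nat_card_sigma]
  rw [← Finset.sum_coe_sort s (fun j => pc (n - j))]
  rfl

open Filter Topology

lemma Ap_add_five (i : ℕ) : Ap (i + 5) ↔ Ap i := by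
  simp [Ap, Nat.add_mod_right]

lemma norm_ite_le {P : Prop} [Decidable P] (r : ℝ) (i : ℕ) :
    ‖(if P then r ^ i else 0)‖ ≤ |r| ^ i := by
  split_ifs
  · rw [Real.norm_eq_abs, abs_pow]
  · simp [pow_nonneg (abs_nonneg r)]

lemma summable_norm_ite {P : ℕ → Prop} [DecidablePred P] {r : ℝ} (hr : |r| < 1) :
    Summable (fun i => ‖(if P i then r ^ i else 0)‖) :=
  Summable.of_nonneg_of_le (fun _ => norm_nonneg _) (fun i => norm_ite_le r i)
    (summable_geometric_of_lt_one (abs_nonneg r) hr)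

lemma tsum_vdiv {r : ℝ} (hr : |r| < 1) {N : ℕ} (hN : 0 < N) :
    (1 - r ^ N) * ∑' i, (if N ∣ i then r ^ i else 0) = 1 := by
  have hv : Summable (fun i => if N ∣ i then r ^ i else 0) := (summable_norm_ite hr).of_norm
  have h1 : ∑ i ∈ range N, (if N ∣ i then r ^ i else 0) = 1 := by
    rw [Finset.sum_eq_single_of_mem 0 (Finset.mem_range.mpr hN)]
    · simp
    · intro i _hi hne
      rw [if_neg]
      intro hdvd
      rw [Finset.mem_range] at _hi
      exact hne (Nat.eq_zero_of_dvd_of_lt hdvd _hi)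
  have h2 : ∀ i, (if N ∣ i + N then r ^ (i + N) else 0) = r ^ N * (if N ∣ i then r ^ i else 0) := by
    intro i
    by_cases h : N ∣ i
    · rw [if_pos ((Nat.dvd_add_self_right).mpr h), if_pos h, pow_add, mul_comm]
    · rw [if_neg (fun hc => h ((Nat.dvd_add_self_right).mp hc)), if_neg h, mul_zero]
  have h3 := Summable.sum_add_tsum_nat_add N hv
  rw [h1] at h3
  have h4 : ∑' i, (if N ∣ i + N then r ^ (i + N) else 0) =
      r ^ N * ∑' i, (if N ∣ i then r ^ i else 0) := by
    rw [tsum_congr h2, tsum_mul_left]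
  rw [h4] at h3
  linear_combination -h3

lemma tsum_uAp {r : ℝ} (hr : |r| < 1) :
    (1 - r ^ 5) * ∑' i, (if Ap i then r ^ i else 0) = r + r ^ 4 := by
  have hv : Summable (fun i => if Ap i then r ^ i else 0) := (summable_norm_ite hr).of_norm
  have h1 : ∑ i ∈ range 5, (if Ap i then r ^ i else 0) = r + r ^ 4 := by
    have e0 : ¬ Ap 0 := by simp [Ap]
    have e1 : Ap 1 := by simp [Ap]
    have e2 : ¬ Ap 2 := by simp [Ap]
    have e3 : ¬ Ap 3 := by simp [Ap]
    have e4 : Ap 4 := by simp [Ap]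
    rw [Finset.sum_range_succ, Finset.sum_range_succ, Finset.sum_range_succ,
      Finset.sum_range_succ, Finset.sum_range_succ]
    rw [if_neg e0, if_pos e1, if_neg e2, if_neg e3, if_pos e4]
    ring
  have h2 : ∀ i, (if Ap (i + 5) then r ^ (i + 5) else 0) = r ^ 5 * (if Ap i then r ^ i else 0) := by
    intro i
    by_cases h : Ap i
    · rw [if_pos ((Ap_add_five i).mpr h), if_pos h, pow_add, mul_comm]
    · rw [if_neg (fun hc => h ((Ap_add_five i).mp hc)), if_neg h, mul_zero]
  have h3 := Summable.sum_add_tsum_nat_add 5 hv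
  rw [h1] at h3
  have h4 : ∑' i, (if Ap (i + 5) then r ^ (i + 5) else 0) =
      r ^ 5 * ∑' i, (if Ap i then r ^ i else 0) := by
    rw [tsum_congr h2, tsum_mul_left]
  rw [h4] at h3
  linear_combination -h3

lemma cc_key {N : ℕ} (hA : Ap N) (n : ℕ) (r : ℝ) :
    ((cc (N+1) n : ℝ)) * r ^ n =
      ∑ p ∈ Finset.HasAntidiagonal.antidiagonal n, (if N ∣ p.1 then r ^ p.1 else 0) * ((cc N p.2 : ℝ) * r ^ p.2) := by
  rw [Finset.Nat.sum_antidiagonal_eq_sum_range_succ_mk]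
  have step : ∀ k ∈ range (n+1), (if N ∣ k then r ^ k else 0) * ((cc N (n - k) : ℝ) * r ^ (n - k))
      = if N ∣ k then (cc N (n - k) : ℝ) * r ^ n else 0 := by
    intro k hk
    split_ifs with h
    · rw [Finset.mem_range] at hk
      rw [← mul_assoc, mul_comm (r ^ k), mul_assoc, ← pow_add]
      congr 2
      omega
    · ring
  rw [Finset.sum_congr rfl step, ← Finset.sum_filter, cc_succ N hA n]
  push_cast
  rw [Finset.sum_mul]

lemma cc_induction {r : ℝ} (hr : |r| < 1) (N : ℕ) :
    Summable (fun n => ‖(cc N n : ℝ) * r ^ n‖) ∧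
    (∏ i ∈ range N, (if Ap i then 1 - r ^ i else 1)) * (∑' n, (cc N n : ℝ) * r ^ n) = 1 := by
  induction N with
  | zero =>
    have hfun : ∀ n, (cc 0 n : ℝ) * r ^ n = if n = 0 then 1 else 0 := by
      intro n
      rw [cc_zero]
      split_ifs with h
      · subst h; simp
      · simp
    constructor
    · apply summable_of_ne_finset_zero (s := {0})
      intro n hn
      simp only [Finset.mem_singleton] at hn
      simp [hfun n, hn]
    · rw [Finset.range_zero, Finset.prod_empty, one_mul]
      rw [tsum_congr hfun, tsum_eq_single 0 (fun n hn => by simp [hn])]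
      simp
  | succ N ih =>
    obtain ⟨ihs, ihv⟩ := ih
    by_cases hA : Ap N
    · have hu : Summable (fun i => ‖(if N ∣ i then r ^ i else 0)‖) := summable_norm_ite hr
      have hsum : Summable (fun n => ‖(cc (N+1) n : ℝ) * r ^ n‖) := by
        have := summable_norm_sum_mul_antidiagonal_of_summable_norm hu ihs
        apply this.congr
        intro n
        rw [← cc_key hA n r]
      have hval : ∑' n, (cc (N+1) n : ℝ) * r ^ n =
          (∑' i, (if N ∣ i then r ^ i else 0)) * (∑' n, (cc N n : ℝ) * r ^ n) := by
        rw [tsum_mul_tsum_eq_tsum_sum_antidiagonal_of_summable_norm hu ihs]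
        exact tsum_congr (fun n => cc_key hA n r)
      refine ⟨hsum, ?_⟩
      rw [hval, Finset.prod_range_succ, if_pos hA]
      have := tsum_vdiv hr hA.one_le
      calc (∏ i ∈ range N, (if Ap i then 1 - r ^ i else 1)) * (1 - r ^ N) *
            ((∑' i, (if N ∣ i then r ^ i else 0)) * (∑' n, (cc N n : ℝ) * r ^ n))
          = ((∏ i ∈ range N, (if Ap i then 1 - r ^ i else 1)) * (∑' n, (cc N n : ℝ) * r ^ n)) *
            ((1 - r ^ N) * (∑' i, (if N ∣ i then r ^ i else 0))) := by ring
        _ = 1 := by rw [ihv, this, one_mul]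
    · have hcc : ∀ n, (cc (N+1) n : ℝ) * r ^ n = (cc N n : ℝ) * r ^ n := by
        intro n; rw [cc_succ_not hA]
      constructor
      · apply ihs.congr; intro n; rw [hcc n]
      · rw [tsum_congr hcc, Finset.prod_range_succ, if_neg hA, mul_one]
        exact ihv

lemma one_sub_sum_le_prod (s : Finset ℕ) (a : ℕ → ℝ) (h0 : ∀ i ∈ s, 0 ≤ a i)
    (h1 : ∀ i ∈ s, a i ≤ 1) : 1 - ∑ i ∈ s, a i ≤ ∏ i ∈ s, (1 - a i) := by
  induction s using Finset.cons_induction with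
  | empty => simp
  | cons j s hj ih =>
    rw [Finset.prod_cons, Finset.sum_cons]
    have hIH := ih (fun i hi => h0 i (Finset.mem_cons_of_mem hi))
      (fun i hi => h1 i (Finset.mem_cons_of_mem hi))
    have hj0 : 0 ≤ a j := h0 j (Finset.mem_cons_self j s)
    have hj1 : a j ≤ 1 := h1 j (Finset.mem_cons_self j s)
    have hSnn : 0 ≤ ∑ i ∈ s, a i :=
      Finset.sum_nonneg (fun i hi => h0 i (Finset.mem_cons_of_mem hi))
    nlinarith [mul_le_mul_of_nonneg_left hIH (by linarith : (0:ℝ) ≤ 1 - a j),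
      mul_nonneg hj0 hSnn]

lemma prod_lower {x : ℝ} (h0 : 0 ≤ x) (h1 : x < 1) :
    ∃ C > 0, ∀ M, C ≤ ∏ i ∈ range M, (if Ap i then 1 - x ^ i else 1) := by
  obtain ⟨K, hK⟩ := exists_pow_lt_of_lt_one (by linarith : (0:ℝ) < (1 - x)/2) h1
  set g : ℕ → ℝ := fun i => if Ap i then 1 - x ^ i else 1 with hg
  have hfac0 : ∀ i, 0 < g i := by
    intro i
    by_cases h : Ap i
    · have hxi : x ^ i ≤ x := pow_le_of_le_one h0 h1.le (Nat.one_le_iff_ne_zero.mp h.one_le)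
      simp only [hg, if_pos h]
      linarith
    · simp [hg, if_neg h]
  have hfac1 : ∀ i, g i ≤ 1 := by
    intro i
    by_cases h : Ap i
    · simp only [hg, if_pos h]
      nlinarith [pow_nonneg h0 i]
    · simp [hg, if_neg h]
  have hQpos : ∀ M, 0 < ∏ i ∈ range M, g i :=
    fun M => Finset.prod_pos (fun i _ => hfac0 i)
  refine ⟨(∏ i ∈ range K, g i) * (1/2), mul_pos (hQpos K) (by norm_num), ?_⟩
  intro M
  rcases le_or_gt M K with hMK | hKM
  · have h2 : (∏ i ∈ range M, g i) * ∏ i ∈ Finset.Ico M K, g i = ∏ i ∈ range K, g i :=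
      Finset.prod_range_mul_prod_Ico g hMK
    have h3 : ∏ i ∈ Finset.Ico M K, g i ≤ 1 :=
      Finset.prod_le_one (fun i _ => (hfac0 i).le) (fun i _ => hfac1 i)
    nlinarith [hQpos M, hQpos K]
  · have h2 : (∏ i ∈ range K, g i) * ∏ i ∈ Finset.Ico K M, g i = ∏ i ∈ range M, g i :=
      Finset.prod_range_mul_prod_Ico g hKM.le
    have hW : 1 - ∑ i ∈ Finset.Ico K M, (if Ap i then x ^ i else 0) ≤
        ∏ i ∈ Finset.Ico K M, g i := by
      have heq : ∀ i ∈ Finset.Ico K M, (1 - (if Ap i then x ^ i else 0)) = g i := by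
        intro i _
        by_cases h : Ap i <;> simp [hg, h]
      rw [← Finset.prod_congr rfl heq]
      apply one_sub_sum_le_prod
      · intro i _
        split_ifs with h
        · positivity
        · exact le_refl (0:ℝ)
      · intro i _
        split_ifs with h
        · exact le_trans (pow_le_of_le_one h0 h1.le (Nat.one_le_iff_ne_zero.mp h.one_le)) h1.le
        · exact zero_le_one
    have hsum : ∑ i ∈ Finset.Ico K M, (if Ap i then x ^ i else 0) ≤ 1/2 := by
      have hstep1 : ∑ i ∈ Finset.Ico K M, (if Ap i then x ^ i else 0) ≤
          ∑ i ∈ Finset.Ico K M, x ^ i := by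
        apply Finset.sum_le_sum
        intro i _
        split_ifs with h
        · exact le_refl (x ^ i)
        · positivity
      have hstep2 : ∑ i ∈ Finset.Ico K M, x ^ i = ∑ j ∈ range (M - K), x ^ (K + j) :=
        Finset.sum_Ico_eq_sum_range (fun k => x ^ k) K M
      have hgeom : Summable (fun j : ℕ => x ^ (K + j)) := by
        have : Summable (fun j : ℕ => x ^ K * x ^ j) :=
          (summable_geometric_of_lt_one h0 h1).mul_left (x ^ K)
        exact this.congr (fun j => by rw [pow_add])
      have hstep3 : ∑ j ∈ range (M - K), x ^ (K + j) ≤ ∑' j : ℕ, x ^ (K + j) :=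
        Summable.sum_le_tsum (range (M - K)) (fun j _ => by positivity) hgeom
      have hstep4 : ∑' j : ℕ, x ^ (K + j) = x ^ K * (1 - x)⁻¹ := by
        rw [tsum_congr (fun j => pow_add x K j), tsum_mul_left,
          tsum_geometric_of_lt_one h0 h1]
      have hstep5 : x ^ K * (1 - x)⁻¹ ≤ 1/2 := by
        have hne : (1:ℝ) - x ≠ 0 := by linarith
        have hxinv : 0 < (1 - x)⁻¹ := inv_pos.mpr (by linarith)
        have hmul := mul_le_mul_of_nonneg_right hK.le hxinv.le
        calc x ^ K * (1 - x)⁻¹ ≤ (1 - x)/2 * (1 - x)⁻¹ := hmul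
          _ = 1/2 := by
            field_simp
      linarith
    have hIco : (1:ℝ)/2 ≤ ∏ i ∈ Finset.Ico K M, g i := by linarith
    nlinarith [hQpos K, hQpos M]

lemma summable_pc {x : ℝ} (h0 : 0 ≤ x) (h1 : x < 1) :
    Summable (fun n => (pc n : ℝ) * x ^ n) := by
  obtain ⟨C, hC, hQ⟩ := prod_lower h0 h1
  have hxabs : |x| < 1 := by rwa [abs_of_nonneg h0]
  apply summable_of_sum_range_le (c := 1/C) (fun n => by positivity)
  intro M
  have hcc := cc_induction hxabs M
  have hsum_eq : ∑ n ∈ range M, (pc n : ℝ) * x ^ n = ∑ n ∈ range M, (cc M n : ℝ) * x ^ n := by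
    apply Finset.sum_congr rfl
    intro n hn
    rw [cc_eq_pc (Finset.mem_range.mp hn)]
  rw [hsum_eq]
  have hnorm : ∀ n, ‖(cc M n : ℝ) * x ^ n‖ = (cc M n : ℝ) * x ^ n := fun n => by
    rw [Real.norm_eq_abs, abs_of_nonneg (by positivity)]
  have hs : Summable (fun n => (cc M n : ℝ) * x ^ n) := hcc.1.congr hnorm
  have hval := hcc.2
  have hle : ∑ n ∈ range M, (cc M n : ℝ) * x ^ n ≤ ∑' n, (cc M n : ℝ) * x ^ n :=
    Summable.sum_le_tsum (range M) (fun n _ => by positivity) hs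
  have hQM := hQ M
  have hQMpos : (0:ℝ) < ∏ i ∈ range M, (if Ap i then 1 - x ^ i else 1) := lt_of_lt_of_le hC hQM
  rw [mul_comm] at hval
  have hS : ∑' n, (cc M n : ℝ) * x ^ n = 1 / (∏ i ∈ range M, (if Ap i then 1 - x ^ i else 1)) :=
    eq_one_div_of_mul_eq_one_left hval
  have hfin : ∑' n, (cc M n : ℝ) * x ^ n ≤ 1/C := by
    rw [hS]
    exact one_div_le_one_div_of_le hC hQM
  linarith

lemma summable_norm_pc {r : ℝ} (hr : |r| < 1) :
    Summable (fun n => ‖(pc n : ℝ) * r ^ n‖) := by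
  apply (summable_pc (abs_nonneg r) hr).congr
  intro n
  rw [norm_mul, norm_pow, Real.norm_eq_abs, Real.norm_eq_abs, Nat.abs_cast]

set_option maxHeartbeats 800000 in
lemma tendsto_cc_tsum {r : ℝ} (hr : |r| < 1) :
    Tendsto (fun N => ∑' n, (cc N n : ℝ) * r ^ n) atTop
      (𝓝 (∑' n, (pc n : ℝ) * r ^ n)) := by
  set x := |r| with hx
  have hx0 : 0 ≤ x := abs_nonneg r
  have hx1 : x < 1 := hr
  have hpcx : Summable (fun n => (pc n : ℝ) * x ^ n) := summable_pc hx0 hx1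
  have hpcr : Summable (fun n => (pc n : ℝ) * r ^ n) := (summable_norm_pc hr).of_norm
  rw [tendsto_iff_norm_sub_tendsto_zero]
  have htail0 : Tendsto (fun N => ∑' k, (pc (k + N) : ℝ) * x ^ (k + N)) atTop (𝓝 0) :=
    tendsto_sum_nat_add (fun n => (pc n : ℝ) * x ^ n)
  apply squeeze_zero (fun N => norm_nonneg _) _ htail0
  · intro N
    have hccs : Summable (fun n => (cc N n : ℝ) * r ^ n) := (cc_induction hr N).1.of_norm
    rw [← Summable.tsum_sub hccs hpcr]
    have hDle : ∀ n, ‖(cc N n : ℝ) * r ^ n - (pc n : ℝ) * r ^ n‖ ≤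
        ((pc n : ℝ) - (cc N n : ℝ)) * x ^ n := by
      intro n
      have hcle : (cc N n : ℝ) ≤ (pc n : ℝ) := by exact_mod_cast cc_le_pc N n
      rw [← sub_mul, norm_mul, norm_pow, Real.norm_eq_abs, Real.norm_eq_abs, ← hx,
        abs_of_nonpos (by linarith)]
      rw [neg_sub]
    have hDsum : Summable (fun n => ((pc n : ℝ) - (cc N n : ℝ)) * x ^ n) := by
      have h1 : Summable (fun n => (cc N n : ℝ) * x ^ n) := by
        apply (cc_induction (show |x| < 1 by rwa [abs_of_nonneg hx0]) N).1.congr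
        intro n
        rw [Real.norm_eq_abs, abs_of_nonneg (by positivity)]
      apply (hpcx.sub h1).congr
      intro n
      ring
    have hnorm_s : Summable (fun n => ‖(cc N n : ℝ) * r ^ n - (pc n : ℝ) * r ^ n‖) :=
      Summable.of_nonneg_of_le (fun n => norm_nonneg _) hDle hDsum
    apply le_trans (norm_tsum_le_tsum_norm hnorm_s)
    have htail : Summable (fun k => ((pc (k + N) : ℝ) - (cc N (k + N) : ℝ)) * x ^ (k + N)) :=
      (summable_nat_add_iff N).mpr hDsum
    have hzero : ∀ n ∈ range N, ‖(cc N n : ℝ) * r ^ n - (pc n : ℝ) * r ^ n‖ = 0 := by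
      intro n hn
      rw [cc_eq_pc (Finset.mem_range.mp hn), sub_self, norm_zero]
    have hsplit : ∑' n, ‖(cc N n : ℝ) * r ^ n - (pc n : ℝ) * r ^ n‖ =
        ∑' k, ‖(cc N (k + N) : ℝ) * r ^ (k + N) - (pc (k + N) : ℝ) * r ^ (k + N)‖ := by
      rw [← Summable.sum_add_tsum_nat_add N hnorm_s, Finset.sum_eq_zero hzero, zero_add]
    rw [hsplit]
    refine Summable.tsum_le_tsum (fun k => ?_) ((summable_nat_add_iff N).mpr hnorm_s)
      ((summable_nat_add_iff N).mpr hpcx)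
    apply le_trans (hDle (k + N))
    have hcnn : (0:ℝ) ≤ (cc N (k + N) : ℝ) := by positivity
    have hxnn : (0:ℝ) ≤ x ^ (k + N) := by positivity
    nlinarith

lemma multipliable_g {r : ℝ} (hr : |r| < 1) :
    Multipliable (fun i : ℕ => if Ap i then 1 - r ^ i else 1) := by
  have hpos : ∀ i, (0:ℝ) < (if Ap i then 1 - r ^ i else 1) := by
    intro i
    split_ifs with h
    · have h1 : |r ^ i| ≤ |r| := by
        rw [abs_pow]
        exact pow_le_of_le_one (abs_nonneg r) (le_of_lt hr)
          (Nat.one_le_iff_ne_zero.mp h.one_le)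
      have := abs_lt.mp (lt_of_le_of_lt h1 hr)
      linarith [this.2]
    · norm_num
  have hlog : Summable (fun i => Real.log (if Ap i then 1 - r ^ i else 1)) := by
    apply Summable.of_norm_bounded (g := fun i => |r| ^ i * (1 - |r|)⁻¹)
    · exact (summable_geometric_of_lt_one (abs_nonneg r) hr).mul_right _
    · intro i
      by_cases h : Ap i
      · rw [if_pos h]
        have hri : |r ^ i| ≤ |r| := by
          rw [abs_pow]
          exact pow_le_of_le_one (abs_nonneg r) (le_of_lt hr)
            (Nat.one_le_iff_ne_zero.mp h.one_le)
        have hir := abs_le.mp hri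
        have ht0 : (0:ℝ) < 1 - r ^ i := by linarith [hir.2, hr]
        have habs : |r ^ i| ≤ |r| ^ i := by rw [abs_pow]
        have hrpow := abs_le.mp habs
        have hinvnn : (0:ℝ) < (1 - |r|)⁻¹ := inv_pos.mpr (by linarith)
        rw [Real.norm_eq_abs, abs_le]
        constructor
        · -- -(x^i * inv) ≤ log (1 - r^i), i.e. -log(1-r^i) ≤ x^i * inv
          rw [neg_le, ← Real.log_inv]
          have hlog2 := Real.log_le_sub_one_of_pos (inv_pos.mpr ht0)
          have hinv : (1 - r ^ i)⁻¹ - 1 = r ^ i / (1 - r ^ i) := by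
            field_simp
            ring
          rw [hinv] at hlog2
          apply le_trans hlog2
          -- r^i / (1 - r^i) ≤ |r|^i * (1 - |r|)⁻¹
          rw [div_le_iff₀ ht0]
          have h2 : (1:ℝ) - |r| ≤ 1 - r ^ i := by linarith [hrpow.2]
          have h3 : (0:ℝ) < 1 - |r| := by linarith
          calc r ^ i ≤ |r| ^ i := hrpow.2
            _ = |r| ^ i * ((1 - |r|)⁻¹ * (1 - |r|)) := by
                rw [inv_mul_cancel₀ (ne_of_gt h3), mul_one]
            _ ≤ |r| ^ i * ((1 - |r|)⁻¹ * (1 - r ^ i)) := by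
                have hnn : (0:ℝ) ≤ |r| ^ i := by positivity
                exact mul_le_mul_of_nonneg_left
                  (mul_le_mul_of_nonneg_left h2 hinvnn.le) hnn
            _ = |r| ^ i * (1 - |r|)⁻¹ * (1 - r ^ i) := by ring
        · have hlog1 := Real.log_le_sub_one_of_pos ht0
          have heq1 : (1:ℝ) - r ^ i - 1 = -(r ^ i) := by ring
          rw [heq1] at hlog1
          have h4 : -(r ^ i) ≤ |r| ^ i := by linarith [hrpow.1]
          have h5 : (0:ℝ) ≤ |r| ^ i := by positivity
          have h3 : (0:ℝ) < 1 - |r| := by linarith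
          have h6 := inv_mul_cancel₀ (ne_of_gt h3)
          have hb1 : (1:ℝ) ≤ (1 - |r|)⁻¹ := by
            nlinarith [mul_nonneg hinvnn.le (abs_nonneg r)]
          nlinarith [mul_le_mul_of_nonneg_left hb1 h5]
      · rw [if_neg h, Real.log_one, norm_zero]
        exact mul_nonneg (by positivity) (inv_nonneg.mpr (by linarith))
  exact Real.multipliable_of_summable_log hpos hlog

lemma r21_key (n : ℕ) (r : ℝ) :
    ((r21 n : ℝ)) * r ^ n =
      ∑ p ∈ Finset.HasAntidiagonal.antidiagonal n,
        (if Ap p.1 then r ^ p.1 else 0) * ((pc p.2 : ℝ) * r ^ p.2) := by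
  rw [Finset.Nat.sum_antidiagonal_eq_sum_range_succ_mk]
  have step : ∀ k ∈ range (n+1), (if Ap k then r ^ k else 0) * ((pc (n - k) : ℝ) * r ^ (n - k))
      = if Ap k then (pc (n - k) : ℝ) * r ^ n else 0 := by
    intro k hk
    split_ifs with h
    · rw [Finset.mem_range] at hk
      rw [← mul_assoc, mul_comm (r ^ k), mul_assoc, ← pow_add]
      congr 2
      omega
    · ring
  rw [Finset.sum_congr rfl step, ← Finset.sum_filter, r21_eq]
  push_cast
  rw [Finset.sum_mul]

theorem r21_gen_fun (q : ℝ) (hq : |q| < 1) :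
    ∑' n : ℕ, (r21 n : ℝ) * q ^ n =
      (q + q ^ 4) /
        ((1 - q ^ 5) * ∏' n : ℕ, if n % 5 = 1 ∨ n % 5 = 4 then 1 - q ^ n else 1) := by
  have hAfun : (fun n : ℕ => if n % 5 = 1 ∨ n % 5 = 4 then 1 - q ^ n else 1) =
      (fun n : ℕ => if Ap n then 1 - q ^ n else 1) := by
    funext n
    by_cases h : n % 5 = 1 ∨ n % 5 = 4
    · rw [if_pos h, if_pos (show Ap n from h)]
    · rw [if_neg h, if_neg (show ¬ Ap n from h)]
  have hprodeq : (∏' n : ℕ, if n % 5 = 1 ∨ n % 5 = 4 then 1 - q ^ n else 1) =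
      ∏' n : ℕ, (if Ap n then 1 - q ^ n else 1) := by rw [hAfun]
  rw [hprodeq]
  have hmg := multipliable_g hq
  have hQlim : Tendsto (fun N => ∏ i ∈ range N, (if Ap i then 1 - q ^ i else 1)) atTop
      (𝓝 (∏' n : ℕ, (if Ap n then 1 - q ^ n else 1))) :=
    hmg.hasProd.tendsto_prod_nat
  have hPlim := tendsto_cc_tsum hq
  have hQP : ∀ N, (∏ i ∈ range N, (if Ap i then 1 - q ^ i else 1)) *
      (∑' n, (cc N n : ℝ) * q ^ n) = 1 := fun N => (cc_induction hq N).2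
  have hTP : (∏' n : ℕ, (if Ap n then 1 - q ^ n else 1)) * (∑' n, (pc n : ℝ) * q ^ n) = 1 := by
    have h1 := hQlim.mul hPlim
    have h2 : Tendsto (fun N => (∏ i ∈ range N, (if Ap i then 1 - q ^ i else 1)) *
        (∑' n, (cc N n : ℝ) * q ^ n)) atTop (𝓝 1) :=
      tendsto_const_nhds.congr (fun N => (hQP N).symm)
    exact tendsto_nhds_unique h1 h2
  have hu : Summable (fun i => ‖(if Ap i then q ^ i else 0)‖) := summable_norm_ite hq
  have hb : Summable (fun n => ‖(pc n : ℝ) * q ^ n‖) := summable_norm_pc hq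
  have hLHS : ∑' n, (r21 n : ℝ) * q ^ n =
      (∑' i, (if Ap i then q ^ i else 0)) * (∑' n, (pc n : ℝ) * q ^ n) := by
    rw [tsum_mul_tsum_eq_tsum_sum_antidiagonal_of_summable_norm hu hb]
    exact tsum_congr (fun n => r21_key n q)
  have hSu := tsum_uAp hq
  have hq5abs : |q| ^ 5 ≤ |q| := pow_le_of_le_one (abs_nonneg q) hq.le (by norm_num)
  have hq5 : q ^ 5 < 1 := by
    have : q ^ 5 ≤ |q ^ 5| := le_abs_self _
    rw [abs_pow] at this
    linarith
  have h5ne : (1:ℝ) - q ^ 5 ≠ 0 := by linarith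
  have hTne : (∏' n : ℕ, (if Ap n then 1 - q ^ n else 1)) ≠ 0 := by
    intro h
    rw [h, zero_mul] at hTP
    exact one_ne_zero hTP.symm
  rw [hLHS, eq_div_iff (mul_ne_zero h5ne hTne)]
  calc (∑' i, (if Ap i then q ^ i else 0)) * (∑' n, (pc n : ℝ) * q ^ n) *
        ((1 - q ^ 5) * ∏' n : ℕ, (if Ap n then 1 - q ^ n else 1))
      = ((1 - q ^ 5) * ∑' i, (if Ap i then q ^ i else 0)) *
        ((∏' n : ℕ, (if Ap n then 1 - q ^ n else 1)) * (∑' n, (pc n : ℝ) * q ^ n)) := by ring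
    _ = q + q ^ 4 := by rw [hSu, hTP, mul_one]
end
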